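/- arXiv:2601.19642 — 5 statements merged into one kernel-verified Lean document; each statement's English description precedes it below -/
import Mathlib

section
/- Let X and Y be locally compact Hausdorff spaces and let T : C₀(X)⁺ → C₀(Y)⁺ be a bijection such that for all f, g ∈ C₀(X)⁺ one has ‖T(f+g)‖ = ‖T(f)+T(g)‖ and ‖T(f·g)‖ = ‖T(f)·T(g)‖. Then there exists a homeomorphism τ : Y → X such that T(f)(y) = f(τ(y)) for all f ∈ C₀(X)⁺ and all y ∈ Y. -/
/-!
Write `λ f = ‖T f‖`. Norm-additivity makes `λ` monotone and subadditive with `λ (2 • f) = 2 λ f`,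
hence positively homogeneous, and norm-multiplicativity then gives `λ f ≤ ‖f‖`. A monotone,
positively homogeneous functional `Λ` that is positive on nonzero functions separates functions
through bumps: `f ≤ g` as soon as `Λ (f * φ) ≤ Λ (g * φ)` for all `φ ≥ 0`. Applied to the sup norm
on `Y` via `‖T f * u‖ = λ (f * T⁻¹ u)`, and to `λ` on `X` via `λ (f * φ) = ‖T f * T φ‖`, this
shows that `T` is positively homogeneous and that `T⁻¹` is monotone.

For `y : Y` let `K_y` be the set of points where `T⁻¹ ψ ≥ 1` for every `ψ ≥ 0` with `ψ y = 1`.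
It is compact and nonempty, and `T f y ≤ f x` on `K_y` because `T ((T f y)⁻¹ • f)` is such a `ψ`.
The reverse inequality comes from `‖ψ‖ - δ ≤ ‖T f * ψ‖` whenever `f ≥ 1` on `{T⁻¹ ψ ≥ δ}`:
it shows that `T f y ≥ 1` as soon as `f ≥ 1` near `K_y`, and therefore `T f y = f x` for
every `x ∈ K_y`. A composition operator `f ↦ f ∘ τ` between the positive cones is induced by a
homeomorphism, since `τ` is then continuous, injective, proper and has dense range.
-/

open scoped ZeroAtInfty
open Set Filter ZeroAtInftyContinuousMap

namespace ZeroAtInftyContinuousMap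

variable {Z : Type*} [TopologicalSpace Z]

def posCone (Z : Type*) [TopologicalSpace Z] : Set C₀(Z, ℝ) := {f | ∀ z, 0 ≤ f z}

theorem zero_mem_posCone : (0 : C₀(Z, ℝ)) ∈ posCone Z := fun _ => le_rfl

theorem smul_mem_posCone {c : ℝ} (hc : 0 ≤ c) {f : C₀(Z, ℝ)} (hf : f ∈ posCone Z) :
    c • f ∈ posCone Z :=
  fun z => mul_nonneg hc (hf z)

theorem mul_mem_posCone {f g : C₀(Z, ℝ)} (hf : f ∈ posCone Z) (hg : g ∈ posCone Z) :
    f * g ∈ posCone Z :=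
  fun z => mul_nonneg (hf z) (hg z)

theorem apply_le_norm (f : C₀(Z, ℝ)) (z : Z) : f z ≤ ‖f‖ :=
  (le_abs_self _).trans (BoundedContinuousFunction.norm_coe_le_norm f.toBCF z)

theorem norm_le_of_forall_apply_le {f : C₀(Z, ℝ)} (hf : f ∈ posCone Z) {c : ℝ} (hc : 0 ≤ c)
    (h : ∀ z, f z ≤ c) : ‖f‖ ≤ c :=
  (BoundedContinuousFunction.norm_le hc).2 fun z => (abs_of_nonneg (hf z)).trans_le (h z)

theorem norm_le_norm_of_apply_le {f g : C₀(Z, ℝ)} (hf : f ∈ posCone Z) (h : ∀ z, f z ≤ g z) :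
    ‖f‖ ≤ ‖g‖ :=
  norm_le_of_forall_apply_le hf (norm_nonneg g) fun z => (h z).trans (apply_le_norm g z)

theorem norm_mul_self_eq (f : C₀(Z, ℝ)) : ‖f * f‖ = ‖f‖ * ‖f‖ := by
  have : star f = f := ext fun z => star_trivial (f z)
  simpa [this] using CStarRing.norm_star_mul_self (x := f)

theorem isCompact_setOf_le_apply (f : C₀(Z, ℝ)) {ε : ℝ} (hε : 0 < ε) :
    IsCompact {z | ε ≤ f z} := by
  obtain ⟨K, hK, hKf⟩ := mem_cocompact.1 <| (zero_at_infty f).eventually (gt_mem_nhds hε)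
  refine hK.of_isClosed_subset (isClosed_le continuous_const f.continuous) fun z hz => ?_
  by_contra hzK
  exact (hKf hzK).not_ge (show ε ≤ f z from hz)

theorem exists_pos_of_ne_zero {f : C₀(Z, ℝ)} (hf : f ∈ posCone Z) (hne : f ≠ 0) :
    ∃ z, 0 < f z := by
  by_contra! h
  exact hne (ext fun z => (h z).antisymm (hf z))

theorem exists_apply_eq_norm {f : C₀(Z, ℝ)} (hf : f ∈ posCone Z) (hne : f ≠ 0) :
    ∃ z, f z = ‖f‖ := by
  obtain ⟨z₀, hz₀⟩ := exists_pos_of_ne_zero hf hne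
  obtain ⟨z, -, hz⟩ := (isCompact_setOf_le_apply f hz₀).exists_isMaxOn ⟨z₀, le_refl (f z₀)⟩
    f.continuous.continuousOn
  refine ⟨z, (apply_le_norm f z).antisymm (norm_le_of_forall_apply_le hf (hf z) fun z' => ?_)⟩
  rcases le_total (f z₀) (f z') with h | h
  · exact hz h
  · exact h.trans (hz (le_refl (f z₀)))

noncomputable def inf (f g : C₀(Z, ℝ)) : C₀(Z, ℝ) where
  toFun z := min (f z) (g z)
  continuous_toFun := f.continuous.min g.continuous
  zero_at_infty' := by simpa using (zero_at_infty f).min (zero_at_infty g)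

noncomputable def truncate (f : C₀(Z, ℝ)) {δ : ℝ} (hδ : 0 ≤ δ) : C₀(Z, ℝ) where
  toFun z := min (f z) δ
  continuous_toFun := f.continuous.min continuous_const
  zero_at_infty' := by
    simpa [min_eq_left hδ] using (zero_at_infty f).min (tendsto_const_nhds (x := δ))

def peaksAt (z : Z) : Set C₀(Z, ℝ) := {ψ | ψ ∈ posCone Z ∧ ψ z = 1}

theorem inf_mem_peaksAt {z : Z} {ψ₁ ψ₂ : C₀(Z, ℝ)} (h₁ : ψ₁ ∈ peaksAt z) (h₂ : ψ₂ ∈ peaksAt z) :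
    inf ψ₁ ψ₂ ∈ peaksAt z :=
  ⟨fun z' => le_min (h₁.1 z') (h₂.1 z'), show min (ψ₁ z) (ψ₂ z) = 1 by rw [h₁.2, h₂.2, min_self]⟩

section LocallyCompact

variable [LocallyCompactSpace Z] [T2Space Z]

theorem exists_bump {K U : Set Z} (hK : IsCompact K) (hU : IsOpen U) (hKU : K ⊆ U) :
    ∃ φ : C₀(Z, ℝ), φ ∈ posCone Z ∧ (∀ z, φ z ≤ 1) ∧ EqOn φ 1 K ∧ ∀ z ∉ U, φ z = 0 := by
  obtain ⟨φ, h1, h0, hφ, hφ01⟩ := exists_continuous_one_zero_of_isCompact hK hU.isClosed_compl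
    (disjoint_compl_right_iff_subset.2 hKU)
  exact ⟨⟨φ, hφ.is_zero_at_infty⟩, fun z => (hφ01 z).1, fun z => (hφ01 z).2, h1,
    fun z hz => h0 hz⟩

theorem exists_bump_at {z₀ : Z} {U : Set Z} (hU : IsOpen U) (hz₀ : z₀ ∈ U) :
    ∃ φ : C₀(Z, ℝ), φ ∈ posCone Z ∧ (∀ z, φ z ≤ 1) ∧ φ z₀ = 1 ∧ ∀ z ∉ U, φ z = 0 := by
  obtain ⟨φ, h0, h1, hφ, hU⟩ := exists_bump isCompact_singleton hU (singleton_subset_iff.2 hz₀)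
  exact ⟨φ, h0, h1, hφ rfl, hU⟩

instance (z : Z) : Nonempty (peaksAt z) :=
  let ⟨φ, hφ, _, hφz, _⟩ := exists_bump_at isOpen_univ (mem_univ z)
  ⟨⟨φ, hφ, hφz⟩⟩

theorem le_of_forall_map_mul_le {Λ : C₀(Z, ℝ) → ℝ}
    (hmono : ∀ f ∈ posCone Z, ∀ g, (∀ z, f z ≤ g z) → Λ f ≤ Λ g)
    (hsmul : ∀ f ∈ posCone Z, ∀ c : ℝ, 0 ≤ c → Λ (c • f) = c * Λ f)
    (hpos : ∀ φ ∈ posCone Z, φ ≠ 0 → 0 < Λ φ) {f g : C₀(Z, ℝ)} (hg : g ∈ posCone Z)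
    (h : ∀ φ ∈ posCone Z, Λ (f * φ) ≤ Λ (g * φ)) (z₀ : Z) : f z₀ ≤ g z₀ := by
  suffices ∀ ε > 0, f z₀ - ε ≤ g z₀ + ε from
    le_of_forall_pos_le_add fun ε hε => by linarith [this (ε / 2) (half_pos hε)]
  intro ε hε
  rcases le_or_gt (f z₀) ε with hfε | hεf
  · linarith [hg z₀]
  set U := {z | f z₀ - ε < f z} ∩ {z | g z < g z₀ + ε}
  have hU : IsOpen U :=
    (isOpen_lt continuous_const f.continuous).inter (isOpen_lt g.continuous continuous_const)
  obtain ⟨φ, hφ, -, hφz₀, hφU⟩ := exists_bump_at hU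
    (show z₀ ∈ U from ⟨by simpa using hε, by simpa using hε⟩)
  have hφne : φ ≠ 0 := fun h0 => by simp [h0] at hφz₀
  have hlow : Λ ((f z₀ - ε) • φ) ≤ Λ (f * φ) := by
    refine hmono _ (fun z => mul_nonneg (by linarith) (hφ z)) _ fun z => ?_
    by_cases hz : z ∈ U
    · exact mul_le_mul_of_nonneg_right hz.1.le (hφ z)
    · simp [hφU z hz]
  have hup : Λ (g * φ) ≤ Λ ((g z₀ + ε) • φ) := by
    refine hmono _ (fun z => mul_nonneg (hg z) (hφ z)) _ fun z => ?_
    by_cases hz : z ∈ U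
    · exact mul_le_mul_of_nonneg_right hz.2.le (hφ z)
    · simp [hφU z hz]
  have := (hlow.trans (h φ hφ)).trans hup
  rw [hsmul φ hφ _ (by linarith), hsmul φ hφ _ (by linarith [hg z₀])] at this
  exact le_of_mul_le_mul_right this (hpos φ hφ hφne)

theorem le_of_forall_norm_mul_le {f g : C₀(Z, ℝ)} (hg : g ∈ posCone Z)
    (h : ∀ φ ∈ posCone Z, ‖f * φ‖ ≤ ‖g * φ‖) (z : Z) : f z ≤ g z :=
  le_of_forall_map_mul_le (fun _ hf _ => norm_le_norm_of_apply_le hf)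
    (fun _ _ c hc => by rw [norm_smul, Real.norm_of_nonneg hc])
    (fun _ _ => norm_pos_iff.2) hg h z

theorem eq_of_forall_norm_mul_eq {f g : C₀(Z, ℝ)} (hf : f ∈ posCone Z) (hg : g ∈ posCone Z)
    (h : ∀ φ ∈ posCone Z, ‖f * φ‖ = ‖g * φ‖) : f = g :=
  ext fun z => (le_of_forall_norm_mul_le hg (fun φ hφ => (h φ hφ).le) z).antisymm
    (le_of_forall_norm_mul_le hf (fun φ hφ => (h φ hφ).ge) z)

end LocallyCompact

section CompositionOperator

variable {X Y : Type*} [TopologicalSpace X] [TopologicalSpace Y] {T : C₀(X, ℝ) → C₀(Y, ℝ)}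
  {τ : Y → X} (hτ : ∀ f ∈ posCone X, ∀ y, T f y = f (τ y))

include hτ

theorem injective_of_forall_apply_eq [LocallyCompactSpace Y] [T2Space Y]
    (hsurj : SurjOn T (posCone X) (posCone Y)) : Function.Injective τ := by
  intro y₁ y₂ h
  by_contra hne
  obtain ⟨u, hu, -, huy₁, huy₂⟩ := exists_bump_at (isOpen_compl_singleton (x := y₂)) hne
  obtain ⟨f, hf, rfl⟩ := hsurj hu
  have := huy₂ y₂ (by simp)
  rw [hτ f hf, ← h, ← hτ f hf, huy₁] at this
  exact one_ne_zero this

variable [LocallyCompactSpace X] [T2Space X]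

theorem continuous_of_forall_apply_eq : Continuous τ :=
  continuous_def.2 fun V hV => isOpen_iff_forall_mem_open.2 fun y₀ hy₀ => by
    obtain ⟨ρ, hρ, -, hρy₀, hρV⟩ := exists_bump_at hV hy₀
    refine ⟨{y | 0 < T ρ y}, fun y hy => by_contra fun hyV => ?_,
      isOpen_lt continuous_const (T ρ).continuous, by simp [hτ ρ hρ, hρy₀]⟩
    exact (show 0 < T ρ y from hy).ne' (by rw [hτ ρ hρ, hρV _ hyV])

theorem isProperMap_of_forall_apply_eq : IsProperMap τ := by
  refine isProperMap_iff_isCompact_preimage.2 ⟨continuous_of_forall_apply_eq hτ, fun K hK => ?_⟩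
  obtain ⟨ρ, hρ, -, hρK, -⟩ := exists_bump hK isOpen_univ (subset_univ K)
  refine (isCompact_setOf_le_apply (T ρ) one_pos).of_isClosed_subset
    (hK.isClosed.preimage (continuous_of_forall_apply_eq hτ)) fun y hy => ?_
  show 1 ≤ T ρ y
  rw [hτ ρ hρ, hρK hy, Pi.one_apply]

theorem denseRange_of_forall_apply_eq (hinj : InjOn T (posCone X)) : DenseRange τ := by
  refine dense_iff_inter_open.2 fun O hO ⟨x, hx⟩ => by_contra fun hempty => ?_
  obtain ⟨h, hh, -, hhx, hhO⟩ := exists_bump_at hO hx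
  have hTh : T h = T 0 := ext fun y => by
    rw [hτ h hh, hτ 0 zero_mem_posCone, hhO _ fun hmem => hempty ⟨_, hmem, y, rfl⟩,
      ZeroAtInftyContinuousMap.zero_apply]
  simp [hinj hh zero_mem_posCone hTh] at hhx

theorem exists_homeomorph_of_forall_apply_eq [LocallyCompactSpace Y] [T2Space Y]
    (hbij : BijOn T (posCone X) (posCone Y)) : ∃ e : Y ≃ₜ X, ⇑e = τ := by
  have hproper := isProperMap_of_forall_apply_eq hτ
  have hsurj : Function.Surjective τ := by
    rw [← range_eq_univ, ← hproper.isClosedMap.isClosed_range.closure_eq]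
    exact (denseRange_of_forall_apply_eq hτ hbij.injOn).closure_range
  exact ⟨(Equiv.ofBijective τ ⟨injective_of_forall_apply_eq hτ hbij.surjOn, hsurj⟩)
    |>.toHomeomorphOfContinuousClosed hproper.continuous hproper.isClosedMap, rfl⟩

end CompositionOperator

end ZeroAtInftyContinuousMap

section Homogeneity

variable {F : ℝ → ℝ}

theorem nat_mul_of_subadditive_of_double (hsub : ∀ s t, 0 ≤ s → 0 ≤ t → F (s + t) ≤ F s + F t)
    (hdouble : ∀ t, 0 ≤ t → F (2 * t) = 2 * F t) {t : ℝ} (ht : 0 ≤ t) (n : ℕ) :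
    F (n * t) = n * F t := by
  have hle : ∀ m : ℕ, F (m * t) ≤ m * F t := by
    intro m
    induction m with
    | zero =>
      have h0 := hdouble 0 le_rfl
      simp only [mul_zero] at h0
      simp only [Nat.cast_zero, zero_mul]
      linarith
    | succ m ih =>
      push_cast
      calc F ((m + 1) * t) = F (m * t + t) := by ring_nf
        _ ≤ F (m * t) + F t := hsub _ _ (by positivity) ht
        _ ≤ (m + 1) * F t := by linarith
  have hpow : ∀ k : ℕ, F (2 ^ k * t) = 2 ^ k * F t := by
    intro k
    induction k with
    | zero => simp
    | succ k ih => rw [pow_succ, mul_comm _ (2 : ℝ), mul_assoc, hdouble _ (by positivity), ih]; ring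
  -- `2ⁿ t = n t + (2ⁿ - n) t`, and subadditivity on both pieces is then forced to be equality
  have hk : (n : ℝ) + (2 ^ n - n : ℕ) = 2 ^ n := by
    rw [Nat.cast_sub Nat.lt_two_pow_self.le]; push_cast; ring
  have hsplit := hsub (n * t) ((2 ^ n - n : ℕ) * t) (by positivity) (by positivity)
  rw [← add_mul, hk, hpow] at hsplit
  have hsum : (2 : ℝ) ^ n * F t = n * F t + (2 ^ n - n : ℕ) * F t := by rw [← add_mul, hk]
  linarith [hle n, hle (2 ^ n - n)]

theorem eq_mul_of_monotoneOn_of_subadditive_of_double (hmono : MonotoneOn F (Ici 0))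
    (hsub : ∀ s t, 0 ≤ s → 0 ≤ t → F (s + t) ≤ F s + F t)
    (hdouble : ∀ t, 0 ≤ t → F (2 * t) = 2 * F t) {t : ℝ} (ht : 0 ≤ t) :
    F t = t * F 1 := by
  have hmul : ∀ {s : ℝ}, 0 ≤ s → ∀ n : ℕ, F (n * s) = n * F s :=
    nat_mul_of_subadditive_of_double hsub hdouble
  have hF1 : 0 ≤ F 1 := by
    have h0 := hdouble 0 le_rfl
    simp only [mul_zero] at h0
    linarith [hmono (mem_Ici.2 le_rfl) (mem_Ici.2 zero_le_one) zero_le_one]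
  -- squeezing `n t` between consecutive integers gives `n |F t - t F 1| ≤ F 1` for every `n`
  have hbound : ∀ n : ℕ, n * |F t - t * F 1| ≤ F 1 := by
    intro n
    set m := ⌊n * t⌋₊
    have hm : (m : ℝ) ≤ n * t := Nat.floor_le (by positivity)
    have hm' : n * t < m + 1 := Nat.lt_floor_add_one _
    have hlow : m * F 1 ≤ n * F t := by
      rw [← hmul ht, ← hmul zero_le_one, mul_one]
      exact hmono (by simp) (by simp; positivity) (by simpa using hm)
    have hup : n * F t ≤ (m + 1) * F 1 := by
      rw [← hmul ht, ← Nat.cast_succ, ← hmul zero_le_one, mul_one]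
      exact hmono (by simp; positivity) (by simp; positivity) (by push_cast; simpa using hm'.le)
    rw [← abs_of_nonneg (Nat.cast_nonneg (α := ℝ) n), ← abs_mul, abs_le]
    constructor <;> nlinarith
  by_contra hne
  have hpos : 0 < |F t - t * F 1| := abs_pos.2 (sub_ne_zero.2 hne)
  obtain ⟨n, hn⟩ := exists_nat_gt (F 1 / |F t - t * F 1|)
  rw [div_lt_iff₀ hpos] at hn
  linarith [hbound n]

end Homogeneity

structure IsNormAddMulConeBij {X Y : Type*} [TopologicalSpace X] [TopologicalSpace Y]
    (T : C₀(X, ℝ) → C₀(Y, ℝ)) : Prop where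
  bijOn : BijOn T (posCone X) (posCone Y)
  norm_map_add : ∀ f ∈ posCone X, ∀ g ∈ posCone X, ‖T (f + g)‖ = ‖T f + T g‖
  norm_map_mul : ∀ f ∈ posCone X, ∀ g ∈ posCone X, ‖T (f * g)‖ = ‖T f * T g‖

namespace IsNormAddMulConeBij

variable {X Y : Type*} [TopologicalSpace X] [TopologicalSpace Y] {T : C₀(X, ℝ) → C₀(Y, ℝ)}
  (hT : IsNormAddMulConeBij T) {f g : C₀(X, ℝ)}

include hT

theorem mapsTo (hf : f ∈ posCone X) : T f ∈ posCone Y := hT.bijOn.mapsTo hf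

theorem map_zero : T 0 = 0 := by
  have h := hT.norm_map_add 0 zero_mem_posCone 0 zero_mem_posCone
  rw [add_zero, ← two_smul ℝ, norm_smul, Real.norm_two] at h
  exact norm_eq_zero.1 (by linarith)

theorem map_ne_zero (hf : f ∈ posCone X) (hne : f ≠ 0) : T f ≠ 0 := fun h =>
  hne (hT.bijOn.injOn hf zero_mem_posCone (h.trans hT.map_zero.symm))

theorem norm_map_pos (hf : f ∈ posCone X) (hne : f ≠ 0) : 0 < ‖T f‖ :=
  norm_pos_iff.2 (hT.map_ne_zero hf hne)

theorem norm_map_add_le (hf : f ∈ posCone X) (hg : g ∈ posCone X) :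
    ‖T (f + g)‖ ≤ ‖T f‖ + ‖T g‖ :=
  (hT.norm_map_add f hf g hg).trans_le (norm_add_le _ _)

theorem norm_map_le_of_le (hf : f ∈ posCone X) (h : ∀ x, f x ≤ g x) : ‖T f‖ ≤ ‖T g‖ := by
  have hgf : g - f ∈ posCone X := fun x => sub_nonneg.2 (h x)
  calc ‖T f‖ ≤ ‖T f + T (g - f)‖ := norm_le_norm_of_apply_le (hT.mapsTo hf) fun y =>
        le_add_of_nonneg_right (hT.mapsTo hgf y)
    _ = ‖T g‖ := by rw [← hT.norm_map_add f hf _ hgf, add_sub_cancel]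

theorem norm_map_smul (hf : f ∈ posCone X) {c : ℝ} (hc : 0 ≤ c) : ‖T (c • f)‖ = c * ‖T f‖ := by
  refine (eq_mul_of_monotoneOn_of_subadditive_of_double (F := fun t => ‖T (t • f)‖)
    ?_ ?_ ?_ hc).trans (by rw [one_smul])
  · exact fun s hs t _ hst => hT.norm_map_le_of_le (smul_mem_posCone hs hf) fun x =>
      mul_le_mul_of_nonneg_right hst (hf x)
  · intro s t hs ht
    rw [show (s + t) • f = s • f + t • f from add_smul s t f]
    exact hT.norm_map_add_le (smul_mem_posCone hs hf) (smul_mem_posCone ht hf)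
  · intro t ht
    rw [mul_smul, two_smul, hT.norm_map_add _ (smul_mem_posCone ht hf) _ (smul_mem_posCone ht hf),
      ← two_smul ℝ, norm_smul, Real.norm_two]

theorem norm_map_le_norm (hf : f ∈ posCone X) : ‖T f‖ ≤ ‖f‖ := by
  have hsq : ‖T f‖ * ‖T f‖ ≤ ‖f‖ * ‖T f‖ := by
    rw [← norm_mul_self_eq, ← hT.norm_map_mul f hf f hf, ← hT.norm_map_smul hf (norm_nonneg f)]
    exact hT.norm_map_le_of_le (mul_mem_posCone hf hf) fun x =>
      mul_le_mul_of_nonneg_right (apply_le_norm f x) (hf x)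
  nlinarith [norm_nonneg (T f), norm_nonneg f]

noncomputable def inv (_ : IsNormAddMulConeBij T) : C₀(Y, ℝ) → C₀(X, ℝ) :=
  Function.invFunOn T (posCone X)

theorem inv_mem {u : C₀(Y, ℝ)} (hu : u ∈ posCone Y) : hT.inv u ∈ posCone X :=
  hT.bijOn.surjOn.mapsTo_invFunOn hu

theorem map_inv {u : C₀(Y, ℝ)} (hu : u ∈ posCone Y) : T (hT.inv u) = u :=
  hT.bijOn.surjOn.rightInvOn_invFunOn hu

theorem inv_map (hf : f ∈ posCone X) : hT.inv (T f) = f :=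
  hT.bijOn.invOn_invFunOn.1 hf

theorem norm_le_norm_inv {u : C₀(Y, ℝ)} (hu : u ∈ posCone Y) : ‖u‖ ≤ ‖hT.inv u‖ := by
  simpa only [hT.map_inv hu] using hT.norm_map_le_norm (hT.inv_mem hu)

theorem norm_map_mul_inv (hf : f ∈ posCone X) {u : C₀(Y, ℝ)} (hu : u ∈ posCone Y) :
    ‖T f * u‖ = ‖T (f * hT.inv u)‖ := by
  rw [hT.norm_map_mul f hf _ (hT.inv_mem hu), hT.map_inv hu]

theorem norm_sub_le_norm_map_mul {ψ : C₀(Y, ℝ)} (hψ : ψ ∈ posCone Y) {δ : ℝ} (hδ : 0 ≤ δ)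
    (hf : f ∈ posCone X) (h1f : ∀ x, δ ≤ hT.inv ψ x → 1 ≤ f x) : ‖ψ‖ - δ ≤ ‖T f * ψ‖ := by
  set g := hT.inv ψ
  have hg := hT.inv_mem hψ
  set m := truncate g hδ
  have hm : m ∈ posCone X := fun x => le_min (hg x) hδ
  have hgm : g - m ∈ posCone X := fun x => sub_nonneg.2 (min_le_left _ _)
  have hTm : ‖T m‖ ≤ δ := (hT.norm_map_le_norm hm).trans
    (norm_le_of_forall_apply_le hm hδ fun x => min_le_right _ _)
  have hgm_le : ∀ x, (g - m) x ≤ (f * g) x := by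
    intro x
    show g x - min (g x) δ ≤ f x * g x
    rcases le_total δ (g x) with h | h
    · exact (sub_le_self _ (le_min (hg x) hδ)).trans (le_mul_of_one_le_left (hg x) (h1f x h))
    · rw [min_eq_left h, sub_self]
      exact mul_nonneg (hf x) (hg x)
  calc ‖ψ‖ - δ = ‖T ((g - m) + m)‖ - δ := by rw [sub_add_cancel, hT.map_inv hψ]
    _ ≤ ‖T (g - m)‖ := by linarith [hT.norm_map_add_le hgm hm]
    _ ≤ ‖T (f * g)‖ := hT.norm_map_le_of_le hgm hgm_le
    _ = ‖T f * ψ‖ := (hT.norm_map_mul_inv hf hψ).symm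

def peakSet (δ : ℝ) (y : Y) : Set X :=
  ⋂ ψ : peaksAt y, {x | δ ≤ hT.inv ψ x}

theorem peakSet_anti {δ δ' : ℝ} (h : δ ≤ δ') (y : Y) : hT.peakSet δ' y ⊆ hT.peakSet δ y :=
  fun _ hx => mem_iInter.2 fun ψ => h.trans (mem_iInter.1 hx ψ)

theorem isClosed_setOf_le_inv (u : C₀(Y, ℝ)) (δ : ℝ) : IsClosed {x | δ ≤ hT.inv u x} :=
  isClosed_le continuous_const (hT.inv u).continuous

theorem setOf_le_inv_nonempty {y : Y} (ψ : peaksAt y) {δ : ℝ} (hδ : δ ≤ 1) :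
    {x | δ ≤ hT.inv ψ x}.Nonempty := by
  have hone : 1 ≤ ‖hT.inv ψ‖ :=
    ψ.2.2 ▸ (apply_le_norm ψ.1 y).trans (hT.norm_le_norm_inv ψ.2.1)
  obtain ⟨x, hx⟩ := exists_apply_eq_norm (hT.inv_mem ψ.2.1) fun h => by
    simp [h] at hone
    linarith
  exact ⟨x, hδ.trans (hx ▸ hone)⟩

section LocallyCompactRange

variable [LocallyCompactSpace Y] [T2Space Y]

theorem map_smul (hf : f ∈ posCone X) {c : ℝ} (hc : 0 ≤ c) : T (c • f) = c • T f := by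
  refine eq_of_forall_norm_mul_eq (hT.mapsTo (smul_mem_posCone hc hf))
    (smul_mem_posCone hc (hT.mapsTo hf)) fun u hu => ?_
  rw [hT.norm_map_mul_inv (smul_mem_posCone hc hf) hu, smul_mul_assoc,
    hT.norm_map_smul (mul_mem_posCone hf (hT.inv_mem hu)) hc, smul_mul_assoc, norm_smul,
    Real.norm_of_nonneg hc, hT.norm_map_mul_inv hf hu]

theorem isCompact_peakSet {δ : ℝ} (hδ : 0 < δ) (y : Y) : IsCompact (hT.peakSet δ y) :=
  (isCompact_setOf_le_apply _ hδ).of_isClosed_subset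
    (isClosed_iInter fun ψ => hT.isClosed_setOf_le_inv ψ δ)
    (iInter_subset _ (Classical.arbitrary _))

theorem mul_apply_le_of_mem_peakSet {ρ : C₀(X, ℝ)} (hρ : ρ ∈ posCone X) {δ : ℝ} {y : Y}
    {x : X} (hx : x ∈ hT.peakSet δ y) : δ * T ρ y ≤ ρ x := by
  rcases (hT.mapsTo hρ y).eq_or_lt with h0 | hpos
  · rw [← h0, mul_zero]
    exact hρ x
  have hρ' := smul_mem_posCone (inv_nonneg.2 hpos.le) hρ
  have hpeak : T ((T ρ y)⁻¹ • ρ) ∈ peaksAt y := ⟨hT.mapsTo hρ', by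
    rw [hT.map_smul hρ (inv_nonneg.2 hpos.le), ZeroAtInftyContinuousMap.smul_apply, smul_eq_mul,
      inv_mul_cancel₀ hpos.ne']⟩
  have h : δ ≤ hT.inv _ x := mem_iInter.1 hx ⟨_, hpeak⟩
  rwa [hT.inv_map hρ', ZeroAtInftyContinuousMap.smul_apply, smul_eq_mul, le_inv_mul_iff₀ hpos,
    mul_comm] at h

theorem exists_peakSet_subset {y : Y} {U : Set X} (hU : IsOpen U) (hKU : hT.peakSet 1 y ⊆ U) :
    ∃ δ, 0 < δ ∧ δ < 1 ∧ hT.peakSet δ y ⊆ U := by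
  have : Nonempty (Ioo (0 : ℝ) 1) := ⟨⟨1 / 2, by norm_num, by norm_num⟩⟩
  have hinter : ⋂ δ : Ioo (0 : ℝ) 1, hT.peakSet δ y ⊆ hT.peakSet 1 y := fun x hx =>
    mem_iInter.2 fun ψ => show 1 ≤ hT.inv ψ x from le_of_forall_lt_imp_le_of_dense fun δ hδ => by
      rcases le_or_gt δ 0 with h0 | h0
      · exact h0.trans (hT.inv_mem ψ.2.1 x)
      · exact mem_iInter.1 (mem_iInter.1 hx ⟨δ, h0, hδ⟩) ψ
  obtain ⟨δ, hδU⟩ := exists_subset_nhds_of_isCompact'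
    (V := fun δ : Ioo (0 : ℝ) 1 => hT.peakSet δ y)
    (fun δ₁ δ₂ => ⟨⟨max δ₁ δ₂, lt_max_of_lt_left δ₁.2.1, max_lt δ₁.2.2 δ₂.2.2⟩,
      hT.peakSet_anti (le_max_left _ _) y, hT.peakSet_anti (le_max_right _ _) y⟩)
    (fun δ => hT.isCompact_peakSet δ.2.1 y)
    (fun δ => isClosed_iInter fun ψ => hT.isClosed_setOf_le_inv ψ δ)
    fun x hx => hU.mem_nhds (hKU (hinter hx))
  exact ⟨δ, δ.2.1, δ.2.2, hδU⟩

end LocallyCompactRange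

section LocallyCompactDomain

variable [LocallyCompactSpace X] [T2Space X]

theorem le_of_map_le (hf : f ∈ posCone X) (hg : g ∈ posCone X) (h : ∀ y, T f y ≤ T g y)
    (x : X) : f x ≤ g x := by
  refine le_of_forall_map_mul_le (fun _ hu _ => hT.norm_map_le_of_le hu)
    (fun _ hu _ hc => hT.norm_map_smul hu hc) (fun _ => hT.norm_map_pos) hg (fun φ hφ => ?_) x
  rw [hT.norm_map_mul f hf φ hφ, hT.norm_map_mul g hg φ hφ]
  exact norm_le_norm_of_apply_le (mul_mem_posCone (hT.mapsTo hf) (hT.mapsTo hφ)) fun y =>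
    mul_le_mul_of_nonneg_right (h y) (hT.mapsTo hφ y)

theorem inv_le_inv {u v : C₀(Y, ℝ)} (hu : u ∈ posCone Y) (hv : v ∈ posCone Y)
    (h : ∀ y, u y ≤ v y) (x : X) : hT.inv u x ≤ hT.inv v x :=
  hT.le_of_map_le (hT.inv_mem hu) (hT.inv_mem hv) (by simpa only [hT.map_inv hu, hT.map_inv hv]) x

theorem directed_setOf_le_inv (δ : ℝ) (y : Y) :
    Directed (· ⊇ ·) fun ψ : peaksAt y => {x | δ ≤ hT.inv ψ x} := fun ψ₁ ψ₂ =>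
  ⟨⟨_, inf_mem_peaksAt ψ₁.2 ψ₂.2⟩,
    fun x hx => hx.trans (hT.inv_le_inv (inf_mem_peaksAt ψ₁.2 ψ₂.2).1 ψ₁.2.1
      (fun _ => min_le_left _ _) x),
    fun x hx => hx.trans (hT.inv_le_inv (inf_mem_peaksAt ψ₁.2 ψ₂.2).1 ψ₂.2.1
      (fun _ => min_le_right _ _) x)⟩

end LocallyCompactDomain

variable [LocallyCompactSpace X] [T2Space X] [LocallyCompactSpace Y] [T2Space Y]

theorem peakSet_nonempty {δ : ℝ} (hδ₀ : 0 < δ) (hδ₁ : δ ≤ 1) (y : Y) :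
    (hT.peakSet δ y).Nonempty :=
  IsCompact.nonempty_iInter_of_directed_nonempty_isCompact_isClosed _
    (hT.directed_setOf_le_inv δ y) (fun ψ => hT.setOf_le_inv_nonempty ψ hδ₁)
    (fun _ => isCompact_setOf_le_apply _ hδ₀) (fun ψ => hT.isClosed_setOf_le_inv ψ δ)

theorem one_sub_le_apply {y : Y} {ψ : C₀(Y, ℝ)} (hψ : ψ ∈ peaksAt y) {δ : ℝ} (hδ : 0 ≤ δ)
    (hf : f ∈ posCone X) (h1f : ∀ x, δ ≤ hT.inv ψ x → 1 ≤ f x) : 1 - δ ≤ T f y := by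
  by_contra! hlt
  obtain ⟨c, hfc, hc⟩ := exists_between hlt
  have hc₀ : 0 ≤ c := (hT.mapsTo hf y).trans hfc.le
  obtain ⟨φ, hφ, hφ1, hφy, hφW⟩ :=
    exists_bump_at (isOpen_lt (T f).continuous continuous_const) (show T f y < c from hfc)
  have hχ := inf_mem_peaksAt hψ ⟨hφ, hφy⟩
  have hlow := hT.norm_sub_le_norm_map_mul hχ.1 hδ hf fun x hx =>
    h1f x (hx.trans (hT.inv_le_inv hχ.1 hψ.1 (fun _ => min_le_left _ _) x))
  have hχ1 : 1 ≤ ‖inf ψ φ‖ := hχ.2 ▸ apply_le_norm _ y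
  -- `T f < c` wherever `inf ψ φ` is nonzero, and `inf ψ φ ≤ 1`
  have hup : ‖T f * inf ψ φ‖ ≤ c := by
    refine norm_le_of_forall_apply_le (mul_mem_posCone (hT.mapsTo hf) hχ.1) hc₀ fun y' => ?_
    have hχφ : inf ψ φ y' ≤ φ y' := min_le_right _ _
    by_cases hy' : T f y' < c
    · exact (mul_le_mul hy'.le (hχφ.trans (hφ1 y')) (hχ.1 y') hc₀).trans_eq (mul_one c)
    · rw [mul_apply, (hχφ.trans (hφW y' hy').le).antisymm (hχ.1 y'), mul_zero]
      exact hc₀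
  linarith

theorem one_sub_le_apply_of_peakSet_subset {y : Y} {δ : ℝ} (hδ : 0 < δ) {U : Set X}
    (hU : IsOpen U) (hKU : hT.peakSet δ y ⊆ U) (hf : f ∈ posCone X) (h1f : ∀ x ∈ U, 1 ≤ f x) :
    1 - δ ≤ T f y := by
  obtain ⟨ψ, hψU⟩ := exists_subset_nhds_of_isCompact' (hT.directed_setOf_le_inv δ y)
    (fun _ => isCompact_setOf_le_apply _ hδ) (fun ψ => hT.isClosed_setOf_le_inv ψ δ)
    fun x hx => hU.mem_nhds (hKU hx)
  exact hT.one_sub_le_apply ψ.2 hδ.le hf fun x hx => h1f x (hψU hx)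

theorem one_le_apply_of_one_le_on_nhds {y : Y} (hf : f ∈ posCone X) {W : Set X}
    (hW : IsOpen W) (hKW : hT.peakSet 1 y ⊆ W) (h1f : ∀ x ∈ W, 1 ≤ f x) : 1 ≤ T f y := by
  obtain ⟨M, hM, hKM, hMW⟩ := exists_compact_between (hT.isCompact_peakSet one_pos y) hW hKW
  obtain ⟨ρ, hρ, -, hρM, hρW⟩ := exists_bump hM hW hMW
  obtain ⟨δ₀, hδ₀, hδ₀1, hδ₀M⟩ := hT.exists_peakSet_subset isOpen_interior hKM
  -- first `T ρ y > 0`; then every `peakSet δ y` lies in `{ρ > 0} ⊆ W`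
  have hρy : 0 < T ρ y := (sub_pos.2 hδ₀1).trans_le <|
    hT.one_sub_le_apply_of_peakSet_subset hδ₀ isOpen_interior hδ₀M hρ
      fun x hx => (hρM (interior_subset hx)).ge
  have hδ : ∀ δ, 0 < δ → 1 - δ ≤ T f y := fun δ hδ =>
    hT.one_sub_le_apply_of_peakSet_subset hδ (isOpen_lt continuous_const ρ.continuous)
      (fun x hx => mul_pos hδ hρy |>.trans_le (hT.mul_apply_le_of_mem_peakSet hρ hx)) hf
      fun x hx => h1f x (by_contra fun hxW => (show 0 < ρ x from hx).ne' (hρW x hxW))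
  exact le_of_forall_pos_le_add fun δ hδ' => by linarith [hδ δ hδ']

theorem le_apply_of_le_on_nhds {y : Y} (hf : f ∈ posCone X) {c : ℝ} (hc : 0 < c) {W : Set X}
    (hW : IsOpen W) (hKW : hT.peakSet 1 y ⊆ W) (hcf : ∀ x ∈ W, c ≤ f x) : c ≤ T f y := by
  have h := hT.one_le_apply_of_one_le_on_nhds (smul_mem_posCone (inv_nonneg.2 hc.le) hf) hW hKW
    fun x hx => (one_le_inv_mul₀ hc).2 (hcf x hx)
  rwa [hT.map_smul hf (inv_nonneg.2 hc.le), ZeroAtInftyContinuousMap.smul_apply, smul_eq_mul,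
    one_le_inv_mul₀ hc] at h

theorem apply_eq_of_mem_peakSet {y : Y} {x₁ : X} (hx₁ : x₁ ∈ hT.peakSet 1 y)
    (hf : f ∈ posCone X) : T f y = f x₁ := by
  refine (one_mul (T f y) ▸ hT.mul_apply_le_of_mem_peakSet hf hx₁).antisymm ?_
  by_contra! hlt
  obtain ⟨c, hfc, hc⟩ := exists_between hlt
  have hc₀ : 0 < c := (hT.mapsTo hf y).trans_lt hfc
  obtain ⟨ψ, hψ, -, hψy, hψW⟩ :=
    exists_bump_at (isOpen_lt (T f).continuous continuous_const) (show T f y < c from hfc)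
  set g := hT.inv ψ
  have hg1 : 1 ≤ g x₁ := mem_iInter.1 hx₁ ⟨ψ, hψ, hψy⟩
  set V := {x | c < f x} ∩ {x | 1 / 2 < g x}
  have hV : IsOpen V :=
    (isOpen_lt continuous_const f.continuous).inter (isOpen_lt continuous_const g.continuous)
  obtain ⟨ρ, hρ, -, hρx₁, hρV⟩ :=
    exists_bump_at hV (show x₁ ∈ V from ⟨hc, show 1 / 2 < g x₁ by linarith⟩)
  obtain ⟨y₁, hy₁⟩ := exists_pos_of_ne_zero (hT.mapsTo hρ)
    (hT.map_ne_zero hρ fun h => by simp [h] at hρx₁)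
  -- a point `y₁` whose peak set lies in `V` sees both `T f ≥ c` and `ψ ≥ 1/2`
  have hKV : hT.peakSet 1 y₁ ⊆ V := fun x hx => by_contra fun hxV =>
    (hy₁.trans_le (one_mul (T ρ y₁) ▸ hT.mul_apply_le_of_mem_peakSet hρ hx)).ne' (hρV x hxV)
  have hcf := hT.le_apply_of_le_on_nhds hf hc₀ hV hKV fun x hx => hx.1.le
  have hψy₁ := hT.le_apply_of_le_on_nhds (hT.inv_mem hψ) one_half_pos hV hKV fun x hx => hx.2.le
  rw [hT.map_inv hψ] at hψy₁
  have hy₁W : T f y₁ < c := by_contra fun h => by linarith [hψW y₁ h]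
  linarith

theorem exists_apply_eq (y : Y) : ∃ x, ∀ f ∈ posCone X, T f y = f x :=
  let ⟨x, hx⟩ := hT.peakSet_nonempty one_pos le_rfl y
  ⟨x, fun _ hf => hT.apply_eq_of_mem_peakSet hx hf⟩

end IsNormAddMulConeBij

/-- Main theorem: a bijection between positive cones of `C₀` spaces which is additive
and multiplicative in norm is a composition operator induced by a homeomorphism. -/
theorem main_theorem {X Y : Type*}
    [TopologicalSpace X] [LocallyCompactSpace X] [T2Space X]
    [TopologicalSpace Y] [LocallyCompactSpace Y] [T2Space Y]
    (T : C₀(X, ℝ) → C₀(Y, ℝ))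
    (hbij : Set.BijOn T {f : C₀(X, ℝ) | ∀ x, 0 ≤ f x} {g : C₀(Y, ℝ) | ∀ y, 0 ≤ g y})
    (hadd : ∀ f g : C₀(X, ℝ), (∀ x, 0 ≤ f x) → (∀ x, 0 ≤ g x) →
      ‖T (f + g)‖ = ‖T f + T g‖)
    (hmul : ∀ f g : C₀(X, ℝ), (∀ x, 0 ≤ f x) → (∀ x, 0 ≤ g x) →
      ‖T (f * g)‖ = ‖T f * T g‖) :
    ∃ τ : Y ≃ₜ X, ∀ f : C₀(X, ℝ), (∀ x, 0 ≤ f x) → ∀ y : Y, T f y = f (τ y) := by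
  have hT : IsNormAddMulConeBij T :=
    ⟨hbij, fun f hf g hg => hadd f g hf hg, fun f hf g hg => hmul f g hf hg⟩
  choose τ hτ using hT.exists_apply_eq
  obtain ⟨e, rfl⟩ := exists_homeomorph_of_forall_apply_eq (fun f hf y => hτ y f hf) hbij
  exact ⟨e, fun f hf y => hτ y f hf⟩
end

section
/- Let X and Y be locally compact Hausdorff spaces and let T : C₀(X)⁺ → C₀(Y)⁺ be a surjective map such that ‖T(f+g)‖ = ‖T(f)+T(g)‖ for all f, g ∈ C₀(X)⁺. Then T is additive and positively homogeneous; that is, T(f+g) = T(f) + T(g) and T(r·f) = r·T(f) for all f, g ∈ C₀(X)⁺ and all real r ≥ 0. -/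
open scoped ZeroAtInfty
open Filter ZeroAtInftyContinuousMap Topology

section HirotaAux

variable {Z : Type*} [TopologicalSpace Z]

private lemma c0_apply_le_norm (f : C₀(Z, ℝ)) (x : Z) : f x ≤ ‖f‖ := by
  have := BoundedContinuousFunction.apply_le_norm f.toBCF x
  simpa [norm_toBCF_eq_norm] using this

private lemma c0_norm_le {f : C₀(Z, ℝ)} {C : ℝ} (hC : 0 ≤ C) (h : ∀ x, |f x| ≤ C) :
    ‖f‖ ≤ C := by
  rw [← norm_toBCF_eq_norm]
  exact (BoundedContinuousFunction.norm_le hC).mpr fun x => by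
    simpa [Real.norm_eq_abs] using h x

private lemma c0_norm_le' {f : C₀(Z, ℝ)} (hf : ∀ x, 0 ≤ f x) {C : ℝ} (hC : 0 ≤ C)
    (h : ∀ x, f x ≤ C) : ‖f‖ ≤ C :=
  c0_norm_le hC fun x => by rw [abs_of_nonneg (hf x)]; exact h x

private lemma c0_exists_max {f : C₀(Z, ℝ)} (hf : ∀ x, 0 ≤ f x) (h0 : 0 < ‖f‖) :
    ∃ z, f z = ‖f‖ := by
  have h2 : 0 < ‖f‖ / 2 := by linarith
  have hev : ∀ᶠ x in cocompact Z, f x < ‖f‖ / 2 :=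
    (zero_at_infty f).eventually_lt_const h2
  obtain ⟨K, hK, hKsub⟩ := mem_cocompact.mp hev
  have hex : ∃ x, ‖f‖ / 2 ≤ f x := by
    by_contra hno
    push_neg at hno
    have := c0_norm_le' hf h2.le fun x => (hno x).le
    linarith
  obtain ⟨x₀, hx₀⟩ := hex
  have hx₀K : x₀ ∈ K := by
    by_contra hxK
    have : f x₀ < ‖f‖ / 2 := hKsub hxK
    linarith
  have hScomp : IsCompact (K ∩ f ⁻¹' Set.Ici (‖f‖ / 2)) :=
    hK.inter_right (IsClosed.preimage (map_continuous f) isClosed_Ici)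
  have hSne : (K ∩ f ⁻¹' Set.Ici (‖f‖ / 2)).Nonempty := ⟨x₀, hx₀K, hx₀⟩
  obtain ⟨z, hzS, hz⟩ := hScomp.exists_isMaxOn hSne (map_continuous f).continuousOn
  have hz2 : ‖f‖ / 2 ≤ f z := hzS.2
  refine ⟨z, le_antisymm (c0_apply_le_norm f z) ?_⟩
  refine c0_norm_le' hf (hf z) fun x => ?_
  by_cases hxS : x ∈ K ∩ f ⁻¹' Set.Ici (‖f‖ / 2)
  · exact hz hxS
  · by_cases hxK : x ∈ K
    · have : x ∉ f ⁻¹' Set.Ici (‖f‖ / 2) := fun hmem => hxS ⟨hxK, hmem⟩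
      have : f x < ‖f‖ / 2 := lt_of_not_ge this
      linarith
    · have : f x < ‖f‖ / 2 := hKsub hxK
      linarith

private lemma exists_c0_bump [LocallyCompactSpace Z] [T2Space Z]
    {V : Set Z} (hV : IsOpen V) {y : Z} (hy : y ∈ V) :
    ∃ (u : C₀(Z, ℝ)) (K : Set Z), IsCompact K ∧ K ⊆ V ∧ u y = 1 ∧
      (∀ x, 0 ≤ u x) ∧ (∀ x, u x ≤ 1) ∧ (∀ x, x ∉ K → u x = 0) := by
  obtain ⟨K, hK, hyK, hKV⟩ := exists_compact_subset hV hy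
  obtain ⟨u, hu1, hu0, -, huIcc⟩ := exists_continuous_one_zero_of_isCompact
    (isCompact_singleton (x := y)) (isOpen_interior (s := K)).isClosed_compl
    (by simpa [Set.disjoint_singleton_left] using hyK)
  have huz : ∀ x, x ∉ K → u x = 0 := fun x hx =>
    hu0 fun hint => hx (interior_subset hint)
  have huzero : Tendsto (u : Z → ℝ) (cocompact Z) (𝓝 0) := by
    refine Tendsto.congr' ?_ tendsto_const_nhds
    filter_upwards [hK.compl_mem_cocompact] with x hx
    exact (huz x hx).symm
  exact ⟨⟨u, huzero⟩, K, hK, hKV, hu1 rfl, fun x => (huIcc x).1, fun x => (huIcc x).2, huz⟩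

end HirotaAux

set_option maxHeartbeats 1000000 in
private lemma hirota_additive {X Y : Type*}
    [TopologicalSpace X] [LocallyCompactSpace X] [T2Space X]
    [TopologicalSpace Y] [LocallyCompactSpace Y] [T2Space Y]
    (T : C₀(X, ℝ) → C₀(Y, ℝ))
    (hmaps : Set.MapsTo T {f : C₀(X, ℝ) | ∀ x, 0 ≤ f x} {g : C₀(Y, ℝ) | ∀ y, 0 ≤ g y})
    (hsurj : Set.SurjOn T {f : C₀(X, ℝ) | ∀ x, 0 ≤ f x} {g : C₀(Y, ℝ) | ∀ y, 0 ≤ g y})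
    (hadd : ∀ f g : C₀(X, ℝ), (∀ x, 0 ≤ f x) → (∀ x, 0 ≤ g x) →
      ‖T (f + g)‖ = ‖T f + T g‖)
    (f g : C₀(X, ℝ)) (hf : ∀ x, 0 ≤ f x) (hg : ∀ x, 0 ≤ g x) :
    T (f + g) = T f + T g := by
  have hfg : ∀ x, 0 ≤ (f + g) x := fun x => by
    simp only [ZeroAtInftyContinuousMap.coe_add, Pi.add_apply]
    exact add_nonneg (hf x) (hg x)
  have ha : ∀ y, 0 ≤ T f y := hmaps hf
  have hb : ∀ y, 0 ≤ T g y := hmaps hg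
  have hc : ∀ y, 0 ≤ T (f + g) y := hmaps hfg
  apply DFunLike.ext
  intro y
  have main : ∀ ε : ℝ, 0 < ε →
      T f y + T g y - 2*ε ≤ T (f + g) y ∧ T (f + g) y ≤ T f y + T g y + 2*ε := by
    intro ε hε
    -- a good neighborhood of y
    set V : Set Y := ({x | T f x < T f y + ε} ∩ {x | T f y - ε < T f x}) ∩
      ({x | T g x < T g y + ε} ∩ {x | T (f + g) x < T (f + g) y + ε}) with hVdef
    have hVopen : IsOpen V := by
      refine IsOpen.inter (IsOpen.inter ?_ ?_) (IsOpen.inter ?_ ?_)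
      · exact isOpen_lt (map_continuous (T f)) continuous_const
      · exact isOpen_lt continuous_const (map_continuous (T f))
      · exact isOpen_lt (map_continuous (T g)) continuous_const
      · exact isOpen_lt (map_continuous (T (f + g))) continuous_const
    have hyV : y ∈ V := by
      refine ⟨⟨?_, ?_⟩, ?_, ?_⟩ <;> simp only [Set.mem_setOf_eq] <;> linarith
    obtain ⟨u, K, hKcomp, hKV, huy, hu0, hu1, huK⟩ := exists_c0_bump hVopen hyV
    set M : ℝ := ‖T f‖ + ‖T g‖ + ‖T (f + g)‖ + 1 with hMdef
    have hMa : ‖T f‖ ≤ M - 1 := by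
      have := norm_nonneg (T g); have := norm_nonneg (T (f + g)); simp only [hMdef]; linarith
    have hMb : ‖T g‖ ≤ M - 1 := by
      have := norm_nonneg (T f); have := norm_nonneg (T (f + g)); simp only [hMdef]; linarith
    have hMc : ‖T (f + g)‖ ≤ M - 1 := by
      have := norm_nonneg (T f); have := norm_nonneg (T g); simp only [hMdef]; linarith
    have hMpos : 0 < M := by
      have := norm_nonneg (T f); linarith
    set m : C₀(Y, ℝ) := M • u with hmdef
    have hm_apply : ∀ x, m x = M * u x := fun x => by
      simp [hmdef]
    have hm0 : ∀ x, 0 ≤ m x := fun x => by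
      rw [hm_apply]; exact mul_nonneg hMpos.le (hu0 x)
    obtain ⟨h, hh0, hTh⟩ := hsurj (show m ∈ {g : C₀(Y, ℝ) | ∀ y, 0 ≤ g y} from hm0)
    have hh0' : ∀ x, 0 ≤ h x := hh0
    have hgh : ∀ x, 0 ≤ (g + h) x := fun x => by
      simp only [ZeroAtInftyContinuousMap.coe_add, Pi.add_apply]
      exact add_nonneg (hg x) (hh0' x)
    set D : C₀(Y, ℝ) := T (g + h) with hDdef
    have hD0 : ∀ x, 0 ≤ D x := hmaps hgh
    -- Lemma A : away from K, D is bounded by ‖T g‖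
    have hLemA : ∀ z, z ∉ K → D z ≤ ‖T g‖ := by
      intro z hz
      have hzopen : IsOpen Kᶜ := hKcomp.isClosed.isOpen_compl
      obtain ⟨v, K', hK'c, hK'sub, hvz, hv0, hv1, hvK'⟩ := exists_c0_bump hzopen hz
      set w : C₀(Y, ℝ) := M • v with hwdef
      have hw_apply : ∀ x, w x = M * v x := fun x => by simp [hwdef]
      have hw0 : ∀ x, 0 ≤ w x := fun x => by
        rw [hw_apply]; exact mul_nonneg hMpos.le (hv0 x)
      obtain ⟨h', hh'0, hTh'⟩ := hsurj (show w ∈ {g : C₀(Y, ℝ) | ∀ y, 0 ≤ g y} from hw0)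
      have hh'0' : ∀ x, 0 ≤ h' x := hh'0
      have hmw : ‖m + w‖ ≤ M := by
        refine c0_norm_le' (fun x => by
          simp only [ZeroAtInftyContinuousMap.coe_add, Pi.add_apply]
          exact add_nonneg (hm0 x) (hw0 x)) hMpos.le fun x => ?_
        simp only [ZeroAtInftyContinuousMap.coe_add, Pi.add_apply]
        rw [hm_apply, hw_apply]
        by_cases hxK : x ∈ K
        · have hvx : v x = 0 := hvK' x fun hmem => (hK'sub hmem) hxK
          rw [hvx]
          have := hu1 x
          nlinarith
        · have hux : u x = 0 := huK x hxK
          rw [hux]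
          have := hv1 x
          nlinarith
      have hhh' : ∀ x, 0 ≤ (h + h') x := fun x => by
        simp only [ZeroAtInftyContinuousMap.coe_add, Pi.add_apply]
        exact add_nonneg (hh0' x) (hh'0' x)
      have h1 : D z + M ≤ ‖D + w‖ := by
        have hle := c0_apply_le_norm (D + w) z
        simp only [ZeroAtInftyContinuousMap.coe_add, Pi.add_apply] at hle
        rw [hw_apply, hvz, mul_one] at hle
        exact hle
      rw [← hTh'] at h1
      have key1 : ‖D + T h'‖ = ‖T ((g + h) + h')‖ := (hadd _ _ hgh hh'0).symm
      rw [key1, add_assoc, hadd g (h + h') hg hhh'] at h1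
      have h2 : ‖T g + T (h + h')‖ ≤ ‖T g‖ + ‖T (h + h')‖ := norm_add_le _ _
      rw [hadd h h' hh0 hh'0, hTh, hTh'] at h2
      linarith
    -- basic norm facts about D
    have hDnorm : ‖D‖ = ‖T g + m‖ := by rw [hDdef, hadd g h hg hh0, hTh]
    have hbm_lower : T g y + M ≤ ‖T g + m‖ := by
      have hle := c0_apply_le_norm (T g + m) y
      simp only [ZeroAtInftyContinuousMap.coe_add, Pi.add_apply] at hle
      rw [hm_apply, huy, mul_one] at hle
      exact hle
    have hbm_upper : ‖T g + m‖ ≤ M + T g y + ε := by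
      refine c0_norm_le' (fun x => by
        simp only [ZeroAtInftyContinuousMap.coe_add, Pi.add_apply]
        exact add_nonneg (hb x) (hm0 x)) (by have := hb y; linarith) fun x => ?_
      simp only [ZeroAtInftyContinuousMap.coe_add, Pi.add_apply]
      rw [hm_apply]
      by_cases hxK : x ∈ K
      · have hVx := hKV hxK
        have hgx : T g x < T g y + ε := hVx.2.1
        have := hu1 x
        have := hu0 x
        nlinarith
      · have hux : u x = 0 := huK x hxK
        rw [hux, mul_zero, add_zero]
        have := c0_apply_le_norm (T g) x
        have := hb y
        linarith
    have hCm : ‖T (f + g) + m‖ = ‖T f + D‖ := by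
      rw [← hTh, ← hadd (f + g) h hfg hh0, add_assoc, hadd f (g + h) hf hgh, hDdef]
    constructor
    · -- lower bound
      have hDnorm_lb : T g y + M ≤ ‖D‖ := by rw [hDnorm]; exact hbm_lower
      have hDpos : 0 < ‖D‖ := by have := hb y; linarith
      obtain ⟨z, hz⟩ := c0_exists_max hD0 hDpos
      have hzK : z ∈ K := by
        by_contra hzK
        have h1 := hLemA z hzK
        rw [hz] at h1
        have := hb y
        linarith
      have hzV := hKV hzK
      have haz : T f y - ε < T f z := hzV.1.2
      have l1 : (T f y - ε) + ‖D‖ ≤ ‖T f + D‖ := by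
        have hle := c0_apply_le_norm (T f + D) z
        simp only [ZeroAtInftyContinuousMap.coe_add, Pi.add_apply] at hle
        rw [hz] at hle
        linarith
      rw [← hCm] at l1
      have l2 : ‖T (f + g) + m‖ ≤ M + (T (f + g) y + ε) := by
        refine c0_norm_le' (fun x => by
          simp only [ZeroAtInftyContinuousMap.coe_add, Pi.add_apply]
          exact add_nonneg (hc x) (hm0 x)) (by have := hc y; linarith) fun x => ?_
        simp only [ZeroAtInftyContinuousMap.coe_add, Pi.add_apply]
        rw [hm_apply]
        by_cases hxK : x ∈ K
        · have hVx := hKV hxK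
          have hcx : T (f + g) x < T (f + g) y + ε := hVx.2.2
          have := hu1 x
          have := hu0 x
          nlinarith
        · have hux : u x = 0 := huK x hxK
          rw [hux, mul_zero, add_zero]
          have := c0_apply_le_norm (T (f + g)) x
          have := hc y
          linarith
      linarith
    · -- upper bound
      have l1 : T (f + g) y + M ≤ ‖T (f + g) + m‖ := by
        have hle := c0_apply_le_norm (T (f + g) + m) y
        simp only [ZeroAtInftyContinuousMap.coe_add, Pi.add_apply] at hle
        rw [hm_apply, huy, mul_one] at hle
        exact hle
      rw [hCm] at l1
      have l2 : ‖T f + D‖ ≤ M + (T f y + T g y + 2*ε) := by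
        refine c0_norm_le' (fun x => by
          simp only [ZeroAtInftyContinuousMap.coe_add, Pi.add_apply]
          exact add_nonneg (ha x) (hD0 x)) (by have := ha y; have := hb y; linarith) fun x => ?_
        simp only [ZeroAtInftyContinuousMap.coe_add, Pi.add_apply]
        by_cases hxK : x ∈ K
        · have hVx := hKV hxK
          have hax : T f x < T f y + ε := hVx.1.1
          have hDx : D x ≤ ‖D‖ := c0_apply_le_norm _ x
          have hDub : ‖D‖ ≤ M + T g y + ε := by rw [hDnorm]; exact hbm_upper
          linarith
        · have hDz := hLemA x hxK
          have := c0_apply_le_norm (T f) x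
          have := ha y; have := hb y
          have := norm_nonneg (T (f + g))
          linarith
      linarith
  have heval : (T f + T g) y = T f y + T g y := by
    simp only [ZeroAtInftyContinuousMap.coe_add, Pi.add_apply]
  rw [heval]
  refine le_antisymm ?_ ?_
  · refine le_of_forall_pos_le_add fun ε hε => ?_
    have := (main (ε/2) (by linarith)).2
    linarith
  · refine le_of_forall_pos_le_add fun ε hε => ?_
    have := (main (ε/2) (by linarith)).1
    linarith

/-- Hirota's theorem: a surjection between positive cones that is additive in norm
is additive and positively homogeneous. -/
theorem additive_and_positively_homogeneous {X Y : Type*}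
    [TopologicalSpace X] [LocallyCompactSpace X] [T2Space X]
    [TopologicalSpace Y] [LocallyCompactSpace Y] [T2Space Y]
    (T : C₀(X, ℝ) → C₀(Y, ℝ))
    (hmaps : Set.MapsTo T {f : C₀(X, ℝ) | ∀ x, 0 ≤ f x} {g : C₀(Y, ℝ) | ∀ y, 0 ≤ g y})
    (hsurj : Set.SurjOn T {f : C₀(X, ℝ) | ∀ x, 0 ≤ f x} {g : C₀(Y, ℝ) | ∀ y, 0 ≤ g y})
    (hadd : ∀ f g : C₀(X, ℝ), (∀ x, 0 ≤ f x) → (∀ x, 0 ≤ g x) →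
      ‖T (f + g)‖ = ‖T f + T g‖) :
    (∀ f g : C₀(X, ℝ), (∀ x, 0 ≤ f x) → (∀ x, 0 ≤ g x) → T (f + g) = T f + T g) ∧
    (∀ f : C₀(X, ℝ), (∀ x, 0 ≤ f x) → ∀ r : ℝ, 0 ≤ r → T (r • f) = r • T f) := by
  have key := hirota_additive T hmaps hsurj hadd
  have h0cone : ∀ x : X, 0 ≤ (0 : C₀(X, ℝ)) x := fun x => by simp
  have hT0 : T 0 = 0 := by
    have h1 := hadd 0 0 h0cone h0cone
    rw [add_zero] at h1
    have h2 : ‖T 0 + T 0‖ = 2 * ‖T 0‖ := by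
      rw [← two_smul ℝ (T 0), norm_smul]
      norm_num
    rw [h2] at h1
    have : ‖T 0‖ = 0 := by linarith
    exact norm_eq_zero.mp this
  refine ⟨key, ?_⟩
  have hsmul_cone : ∀ (c : ℝ), 0 ≤ c → ∀ (f : C₀(X, ℝ)), (∀ x, 0 ≤ f x) →
      (∀ x, 0 ≤ (c • f) x) := fun c hc f hf x => by
    have : (c • f) x = c * f x := by simp
    rw [this]
    exact mul_nonneg hc (hf x)
  have hnat : ∀ (n : ℕ) (f : C₀(X, ℝ)), (∀ x, 0 ≤ f x) →
      T ((n : ℝ) • f) = (n : ℝ) • T f := by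
    intro n
    induction n with
    | zero => intro f hf; simp [hT0]
    | succ n ih =>
      intro f hf
      have hns : ((n : ℝ) + 1) • f = (n : ℝ) • f + f := by
        ext x
        simp only [ZeroAtInftyContinuousMap.coe_smul, ZeroAtInftyContinuousMap.coe_add,
          Pi.add_apply, Pi.smul_apply, smul_eq_mul]
        ring
      have hns' : ((n : ℝ) + 1) • T f = (n : ℝ) • T f + T f := by
        ext x
        simp only [ZeroAtInftyContinuousMap.coe_smul, ZeroAtInftyContinuousMap.coe_add,
          Pi.add_apply, Pi.smul_apply, smul_eq_mul]
        ring
      push_cast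
      rw [hns, key _ _ (hsmul_cone _ (Nat.cast_nonneg n) f hf) hf, ih f hf, hns']
  have hinv : ∀ (n : ℕ), n ≠ 0 → ∀ (f : C₀(X, ℝ)), (∀ x, 0 ≤ f x) →
      T ((n : ℝ)⁻¹ • f) = (n : ℝ)⁻¹ • T f := by
    intro n hn f hf
    have hn' : ((n : ℝ)) ≠ 0 := Nat.cast_ne_zero.mpr hn
    have h1 : T ((n : ℝ) • ((n : ℝ)⁻¹ • f)) = (n : ℝ) • T ((n : ℝ)⁻¹ • f) :=
      hnat n _ (hsmul_cone _ (inv_nonneg.mpr (Nat.cast_nonneg n)) f hf)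
    rw [smul_smul, mul_inv_cancel₀ hn', one_smul] at h1
    have h2 := congrArg (fun z : C₀(Y, ℝ) => (n : ℝ)⁻¹ • z) h1
    simpa [smul_smul, inv_mul_cancel₀ hn'] using h2.symm
  have hq : ∀ (q : ℚ), 0 ≤ q → ∀ (f : C₀(X, ℝ)), (∀ x, 0 ≤ f x) →
      T ((q : ℝ) • f) = (q : ℝ) • T f := by
    intro q hq0 f hf
    have hden : (q.den : ℝ) ≠ 0 := Nat.cast_ne_zero.mpr q.den_nz
    have hnum : ((q.num.toNat : ℕ) : ℝ) = (q.num : ℝ) := by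
      exact_mod_cast Int.toNat_of_nonneg (Rat.num_nonneg.mpr hq0)
    have hqr : (q : ℝ) = (q.num.toNat : ℝ) * (q.den : ℝ)⁻¹ := by
      rw [Rat.cast_def, div_eq_mul_inv, hnum]
    have harg : (q : ℝ) • f = (q.num.toNat : ℝ) • ((q.den : ℝ)⁻¹ • f) := by
      ext x
      simp only [ZeroAtInftyContinuousMap.coe_smul, Pi.smul_apply, smul_eq_mul]
      rw [hqr]; ring
    have hres : (q.num.toNat : ℝ) • ((q.den : ℝ)⁻¹ • T f) = (q : ℝ) • T f := by
      ext x
      simp only [ZeroAtInftyContinuousMap.coe_smul, Pi.smul_apply, smul_eq_mul]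
      rw [hqr]; ring
    rw [harg, hnat q.num.toNat _ (hsmul_cone _ (inv_nonneg.mpr (Nat.cast_nonneg _)) f hf),
      hinv q.den q.den_nz f hf, hres]
  intro f hf r hr
  rcases eq_or_lt_of_le hr with hr0 | hrpos
  · rw [← hr0]
    simp [hT0]
  have hmono : ∀ s t : ℝ, 0 ≤ s → s ≤ t → ∀ y, T (s • f) y ≤ T (t • f) y := by
    intro s t hs hst y
    have hd : t • f = s • f + (t - s) • f := by
      ext x
      simp only [ZeroAtInftyContinuousMap.coe_smul, ZeroAtInftyContinuousMap.coe_add,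
        Pi.add_apply, Pi.smul_apply, smul_eq_mul]
      ring
    rw [hd, key _ _ (hsmul_cone s hs f hf) (hsmul_cone _ (by linarith) f hf)]
    have hpos := hmaps (hsmul_cone (t - s) (by linarith) f hf) y
    simp only [ZeroAtInftyContinuousMap.coe_add, Pi.add_apply]
    linarith
  apply DFunLike.ext
  intro y
  have hTfy : 0 ≤ T f y := hmaps hf y
  have hrTf : (r • T f) y = r * T f y := by simp
  rw [hrTf]
  have hub : ∀ (q : ℚ), r ≤ (q : ℝ) → T (r • f) y ≤ (q : ℝ) * T f y := by
    intro q hq'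
    have h0q : (0 : ℚ) ≤ q := by exact_mod_cast le_trans hr hq'
    have hm := hmono r (q : ℝ) hr hq' y
    rw [hq q h0q f hf] at hm
    have : ((q : ℝ) • T f) y = (q : ℝ) * T f y := by simp
    rw [this] at hm
    exact hm
  have hlb : ∀ (q : ℚ), 0 ≤ q → (q : ℝ) ≤ r → (q : ℝ) * T f y ≤ T (r • f) y := by
    intro q h0q hq'
    have hm := hmono (q : ℝ) r (by exact_mod_cast h0q) hq' y
    rw [hq q h0q f hf] at hm
    have : ((q : ℝ) • T f) y = (q : ℝ) * T f y := by simp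
    rw [this] at hm
    exact hm
  refine le_antisymm ?_ ?_
  · refine le_of_forall_pos_le_add fun ε hε => ?_
    have hδpos : 0 < ε / (T f y + 1) := by positivity
    obtain ⟨q, hq1, hq2⟩ := exists_rat_btwn (show r < r + ε / (T f y + 1) by linarith)
    have h1 := hub q hq1.le
    have h2 : (q : ℝ) * T f y ≤ (r + ε / (T f y + 1)) * T f y :=
      mul_le_mul_of_nonneg_right hq2.le hTfy
    have h3 : ε / (T f y + 1) * T f y ≤ ε := by
      rw [div_mul_eq_mul_div, div_le_iff₀ (by linarith)]
      nlinarith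
    nlinarith
  · refine le_of_forall_pos_le_add fun ε hε => ?_
    have hδpos : 0 < ε / (T f y + 1) := by positivity
    set l : ℝ := max (r - ε / (T f y + 1)) 0 with hldef
    have hlr : l < r := by
      rw [hldef]
      apply max_lt (by linarith) hrpos
    obtain ⟨q, hq1, hq2⟩ := exists_rat_btwn hlr
    have h0q : (0 : ℚ) ≤ q := by
      have : (0 : ℝ) ≤ l := le_max_right _ _
      exact_mod_cast le_of_lt (lt_of_le_of_lt this hq1)
    have h1 := hlb q h0q hq2.le
    have hql : r - ε / (T f y + 1) ≤ (q : ℝ) :=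
      le_of_lt (lt_of_le_of_lt (le_max_left _ _) hq1)
    have h2 : (r - ε / (T f y + 1)) * T f y ≤ (q : ℝ) * T f y :=
      mul_le_mul_of_nonneg_right hql hTfy
    have h3 : ε / (T f y + 1) * T f y ≤ ε := by
      rw [div_mul_eq_mul_div, div_le_iff₀ (by linarith)]
      nlinarith
    nlinarith
end

section
/- Let X and Y be locally compact Hausdorff spaces and let T : C₀(X)⁺ → C₀(Y)⁺ be a map with T(0) = 0 satisfying ‖T(f·g)‖ = ‖T(f)·T(g)‖ for all f, g ∈ C₀(X)⁺. Define T̃ : C₀(X) → C₀(Y) by T̃(f) = T(f₊) − T(f₋). Then for every f ∈ C₀(X), ‖T̃(f)‖ = max{‖T(f₊)‖, ‖T(f₋)‖}. -/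
open scoped ZeroAtInfty
open Filter ZeroAtInftyContinuousMap

/-- The positive part `f₊ = max (f, 0)` of a real-valued continuous function
vanishing at infinity. -/
noncomputable def posPart {X : Type*} [TopologicalSpace X] (f : C₀(X, ℝ)) : C₀(X, ℝ) :=
  ⟨⟨fun x => max (f x) 0, (map_continuous f).max continuous_const⟩, by
    simpa using (zero_at_infty f).max
      (tendsto_const_nhds : Tendsto (fun _ : X => (0 : ℝ)) (cocompact X) (nhds 0))⟩

/-- The negative part `f₋ = max (-f, 0)`. -/
noncomputable def negPart {X : Type*} [TopologicalSpace X] (f : C₀(X, ℝ)) : C₀(X, ℝ) :=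
  posPart (-f)

/-- The extension `T̃(f) = T(f₊) - T(f₋)` of a map between positive cones. -/
noncomputable def tildeT {X Y : Type*} [TopologicalSpace X] [TopologicalSpace Y]
    (T : C₀(X, ℝ) → C₀(Y, ℝ)) (f : C₀(X, ℝ)) : C₀(Y, ℝ) :=
  T (posPart f) - T (negPart f)

lemma pointwise_norm_le {Y : Type*} [TopologicalSpace Y] (g : C₀(Y, ℝ)) (y : Y) :
    ‖g y‖ ≤ ‖g‖ := by
  rw [← norm_toBCF_eq_norm]
  exact g.toBCF.norm_coe_le_norm y

lemma norm_sub_eq_max {Y : Type*} [TopologicalSpace Y] (g h : C₀(Y, ℝ))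
    (hg : ∀ y, 0 ≤ g y) (hh : ∀ y, 0 ≤ h y) (hgh : g * h = 0) :
    ‖g - h‖ = max ‖g‖ ‖h‖ := by
  have hpt : ∀ y, g y = 0 ∨ h y = 0 := by
    intro y
    have := congrArg (fun k : C₀(Y, ℝ) => k y) hgh
    simpa using mul_eq_zero.mp this
  apply le_antisymm
  · rw [← norm_toBCF_eq_norm]
    rw [BoundedContinuousFunction.norm_le (le_max_of_le_left (norm_nonneg g))]
    intro y
    have hy : (g - h).toBCF y = g y - h y := rfl
    rw [hy]
    rcases hpt y with h0 | h0
    · rw [h0, zero_sub, norm_neg]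
      exact le_max_of_le_right (pointwise_norm_le h y)
    · rw [h0, sub_zero]
      exact le_max_of_le_left (pointwise_norm_le g y)
  · have key : ∀ (a b : C₀(Y, ℝ)), (∀ y, 0 ≤ a y) → (∀ y, 0 ≤ b y) →
        (∀ y, a y = 0 ∨ b y = 0) → ‖a‖ ≤ ‖a - b‖ := by
      intro a b ha hb hab
      rw [← norm_toBCF_eq_norm (f := a)]
      rw [BoundedContinuousFunction.norm_le (norm_nonneg (a - b))]
      intro y
      rcases hab y with h0 | h0
      · simp only [ZeroAtInftyContinuousMap.toBCF_apply, h0, norm_zero]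
        exact norm_nonneg _
      · have : a y = ‖(a - b) y‖ := by
          simp [h0, abs_of_nonneg (ha y)]
        simp only [ZeroAtInftyContinuousMap.toBCF_apply, Real.norm_eq_abs,
          abs_of_nonneg (ha y)]
        rw [this]
        exact pointwise_norm_le _ y
    refine max_le (key g h hg hh hpt) ?_
    have := key h g hh hg (fun y => (hpt y).symm)
    calc ‖h‖ ≤ ‖h - g‖ := this
      _ = ‖g - h‖ := norm_sub_rev h g

/-- The norm of the extension `T̃` is the maximum of the norms of the images of the
positive and negative parts. -/
theorem norm_tildeT_eq_max {X Y : Type*}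
    [TopologicalSpace X] [LocallyCompactSpace X] [T2Space X]
    [TopologicalSpace Y] [LocallyCompactSpace Y] [T2Space Y]
    (T : C₀(X, ℝ) → C₀(Y, ℝ))
    (hmaps : Set.MapsTo T {f : C₀(X, ℝ) | ∀ x, 0 ≤ f x} {g : C₀(Y, ℝ) | ∀ y, 0 ≤ g y})
    (hzero : T 0 = 0)
    (hmul : ∀ f g : C₀(X, ℝ), (∀ x, 0 ≤ f x) → (∀ x, 0 ≤ g x) →
      ‖T (f * g)‖ = ‖T f * T g‖) :
    ∀ f : C₀(X, ℝ), ‖tildeT T f‖ = max ‖T (posPart f)‖ ‖T (negPart f)‖ := by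
  intro f
  have hpos : ∀ x, 0 ≤ posPart f x := fun x => le_max_right _ _
  have hneg : ∀ x, 0 ≤ negPart f x := fun x => le_max_right _ _
  have hprod : posPart f * negPart f = 0 := by
    ext x
    show max (f x) 0 * max (-f x) 0 = 0
    rcases le_total (f x) 0 with h | h
    · rw [max_eq_right h, zero_mul]
    · rw [max_eq_right (neg_nonpos_of_nonneg h), mul_zero]
  have h0 : ‖T (posPart f) * T (negPart f)‖ = 0 := by
    rw [← hmul _ _ hpos hneg, hprod, hzero, norm_zero]
  have hTprod : T (posPart f) * T (negPart f) = 0 := norm_eq_zero.mp h0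
  exact norm_sub_eq_max _ _ (hmaps hpos) (hmaps hneg) hTprod
end

section
/- Let X and Y be locally compact Hausdorff spaces and let T : C₀(X)⁺ → C₀(Y)⁺ be a bijection such that for all f, g ∈ C₀(X)⁺ one has ‖T(f+g)‖ = ‖T(f)+T(g)‖ and ‖T(f·g)‖ = ‖T(f)·T(g)‖. Define T̃ : C₀(X) → C₀(Y) by T̃(f) = T(f₊) − T(f₋). Then ‖T̃(f)‖ ≤ ‖f‖ for every f ∈ C₀(X). -/
open scoped ZeroAtInfty
open Filter ZeroAtInftyContinuousMap

/-!
On the positive cone, `‖T (f + f)‖ = 2 ‖T f‖` makes `T` homogeneous in norm for the scalars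
`2 ^ k`, and splitting `f = f * f + (f - f * f)` gives `‖T f‖ ^ 2 ≤ ‖T f‖` whenever `‖f‖ ≤ 1`.
Rescaling by a power of two then yields `‖T f‖ ≤ 2 ‖f‖`. Applied to the iterated squares of `f`,
with `‖g * g‖ = ‖g‖ ^ 2`, this becomes `‖T f‖ ^ 2 ^ n ≤ 2 ‖f‖ ^ 2 ^ n`, and the factor `2`
disappears as `n → ∞`. Finally `|T f₊ - T f₋| ≤ max (T f₊) (T f₋)` pointwise.
-/

lemma le_of_forall_pow_two_pow_le_mul {a b C : ℝ} (hb : 0 ≤ b)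
    (h : ∀ n : ℕ, a ^ 2 ^ n ≤ C * b ^ 2 ^ n) : a ≤ b := by
  by_contra! hba
  have ha : 0 < a := hb.trans_lt hba
  have h₀ : a ≤ C * b := by simpa using h 0
  have hC : 0 < C := pos_of_mul_pos_left (ha.trans_le h₀) hb
  have hr₀ : 0 ≤ b / a := div_nonneg hb ha.le
  have hr₁ : b / a < 1 := (div_lt_one ha).2 hba
  obtain ⟨n, hn⟩ := exists_pow_lt_of_lt_one (inv_pos.2 hC) hr₁
  have hpow : (b / a) ^ 2 ^ n < C⁻¹ :=
    (pow_le_pow_of_le_one hr₀ hr₁.le Nat.lt_two_pow_self.le).trans_lt hn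
  have hlt : C * (b / a) ^ 2 ^ n < 1 :=
    calc C * (b / a) ^ 2 ^ n < C * C⁻¹ := mul_lt_mul_of_pos_left hpow hC
      _ = 1 := mul_inv_cancel₀ hC.ne'
  rw [div_pow, mul_div_assoc', div_lt_one (by positivity)] at hlt
  exact (h n).not_gt hlt

namespace ZeroAtInftyContinuousMap

variable {X : Type*} [TopologicalSpace X]

lemma norm_le_of_forall_abs_le {f : C₀(X, ℝ)} {C : ℝ} (hC : 0 ≤ C) (h : ∀ x, |f x| ≤ C) :
    ‖f‖ ≤ C :=
  (BoundedContinuousFunction.norm_le hC).mpr h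

lemma abs_apply_le_norm (f : C₀(X, ℝ)) (x : X) : |f x| ≤ ‖f‖ :=
  f.toBCF.norm_coe_le_norm x

lemma norm_mul_self_eq_sq (f : C₀(X, ℝ)) : ‖f * f‖ = ‖f‖ ^ 2 :=
  IsSelfAdjoint.norm_mul_self (by ext x; simp)

lemma smul_apply_nonneg {c : ℝ} (hc : 0 ≤ c) {f : C₀(X, ℝ)} (hf : ∀ x, 0 ≤ f x) :
    ∀ x, 0 ≤ (c • f) x :=
  fun x => mul_nonneg hc (hf x)

lemma norm_le_norm_add_of_nonneg {f g : C₀(X, ℝ)} (hf : ∀ x, 0 ≤ f x) (hg : ∀ x, 0 ≤ g x) :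
    ‖f‖ ≤ ‖f + g‖ :=
  norm_le_of_forall_abs_le (norm_nonneg _) fun x => by
    calc |f x| ≤ |(f + g) x| := by
          rw [add_apply, abs_of_nonneg (hf x), abs_of_nonneg (add_nonneg (hf x) (hg x))]
          linarith [hg x]
      _ ≤ ‖f + g‖ := abs_apply_le_norm _ x

lemma norm_sub_le_max_of_nonneg {f g : C₀(X, ℝ)} (hf : ∀ x, 0 ≤ f x) (hg : ∀ x, 0 ≤ g x) :
    ‖f - g‖ ≤ max ‖f‖ ‖g‖ :=
  norm_le_of_forall_abs_le (le_max_of_le_left (norm_nonneg f)) fun x =>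
    abs_sub_le_of_nonneg_of_le (hf x)
      (((le_abs_self _).trans (abs_apply_le_norm f x)).trans (le_max_left _ _)) (hg x)
      (((le_abs_self _).trans (abs_apply_le_norm g x)).trans (le_max_right _ _))

lemma posPart_nonneg (f : C₀(X, ℝ)) (x : X) : 0 ≤ posPart f x :=
  le_max_right _ _

lemma negPart_nonneg (f : C₀(X, ℝ)) (x : X) : 0 ≤ negPart f x :=
  le_max_right _ _

lemma norm_posPart_le (f : C₀(X, ℝ)) : ‖posPart f‖ ≤ ‖f‖ :=
  norm_le_of_forall_abs_le (norm_nonneg f) fun x => by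
    rw [abs_of_nonneg (posPart_nonneg f x)]
    exact max_le ((le_abs_self _).trans (abs_apply_le_norm f x)) (norm_nonneg f)

lemma norm_negPart_le (f : C₀(X, ℝ)) : ‖negPart f‖ ≤ ‖f‖ :=
  (norm_posPart_le (-f)).trans_eq (norm_neg f)

end ZeroAtInftyContinuousMap

section PositiveConeMap

variable {X Y : Type*} [TopologicalSpace X] [TopologicalSpace Y] {T : C₀(X, ℝ) → C₀(Y, ℝ)}
  (hpos : Set.MapsTo T {f | ∀ x, 0 ≤ f x} {g | ∀ y, 0 ≤ g y})
  (hadd : ∀ f g : C₀(X, ℝ), (∀ x, 0 ≤ f x) → (∀ x, 0 ≤ g x) → ‖T (f + g)‖ = ‖T f + T g‖)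
  (hmul : ∀ f g : C₀(X, ℝ), (∀ x, 0 ≤ f x) → (∀ x, 0 ≤ g x) → ‖T (f * g)‖ = ‖T f * T g‖)

section
include hadd

lemma norm_apply_add_self {f : C₀(X, ℝ)} (hf : ∀ x, 0 ≤ f x) : ‖T (f + f)‖ = 2 * ‖T f‖ := by
  rw [hadd f f hf hf, ← two_smul ℝ, norm_smul, Real.norm_two]

lemma norm_apply_two_zpow_smul {f : C₀(X, ℝ)} (hf : ∀ x, 0 ≤ f x) (k : ℤ) :
    ‖T ((2 : ℝ) ^ k • f)‖ = 2 ^ k * ‖T f‖ := by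
  have hdouble (k : ℤ) : ‖T ((2 : ℝ) ^ (k + 1) • f)‖ = 2 * ‖T ((2 : ℝ) ^ k • f)‖ := by
    rw [zpow_add_one₀ two_ne_zero, mul_comm, mul_smul, two_smul,
      norm_apply_add_self hadd (smul_apply_nonneg (by positivity) hf)]
  induction k using Int.induction_on with
  | zero => simp
  | succ k ih =>
    rw [hdouble, ih, zpow_add_one₀ two_ne_zero]
    ring
  | pred k ih =>
    have h := hdouble (-k - 1)
    rw [sub_add_cancel, ih, zpow_sub_one₀ two_ne_zero] at h
    rw [zpow_sub_one₀ two_ne_zero]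
    linear_combination -h / 2

end

include hpos hadd hmul

lemma norm_apply_le_one {f : C₀(X, ℝ)} (hf : ∀ x, 0 ≤ f x) (hf₁ : ‖f‖ ≤ 1) : ‖T f‖ ≤ 1 := by
  have hsq : ∀ x, 0 ≤ (f * f) x := fun x => mul_self_nonneg (f x)
  have hrest : ∀ x, 0 ≤ (f - f * f) x := fun x => by
    have : f x ≤ 1 := (le_abs_self _).trans ((abs_apply_le_norm f x).trans hf₁)
    simp only [ZeroAtInftyContinuousMap.sub_apply, ZeroAtInftyContinuousMap.mul_apply]
    nlinarith [hf x]
  have : ‖T f‖ ^ 2 ≤ ‖T f‖ :=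
    calc ‖T f‖ ^ 2 = ‖T (f * f)‖ := by rw [hmul f f hf hf, norm_mul_self_eq_sq]
      _ ≤ ‖T (f * f) + T (f - f * f)‖ := norm_le_norm_add_of_nonneg (hpos hsq) (hpos hrest)
      _ = ‖T f‖ := by rw [← hadd _ _ hsq hrest, add_sub_cancel]
  nlinarith [norm_nonneg (T f)]

lemma norm_apply_le_two_mul {f : C₀(X, ℝ)} (hf : ∀ x, 0 ≤ f x) : ‖T f‖ ≤ 2 * ‖f‖ := by
  rcases (norm_nonneg f).eq_or_lt with hf₀ | hf₀
  · obtain rfl : f = 0 := norm_eq_zero.1 hf₀.symm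
    have h := norm_apply_add_self hadd hf
    rw [add_zero] at h
    rw [norm_zero, mul_zero]
    linarith
  obtain ⟨k, hk_lt, hk_le⟩ := exists_mem_Ioc_zpow hf₀ one_lt_two
  set g := (2 : ℝ) ^ (-(k + 1)) • f
  have hg : ∀ x, 0 ≤ g x := smul_apply_nonneg (by positivity) hf
  have hfg : f = (2 : ℝ) ^ (k + 1) • g := by
    rw [smul_smul, ← zpow_add₀ two_ne_zero, add_neg_cancel, zpow_zero, one_smul]
  have hg₁ : ‖g‖ ≤ 1 := by
    rw [norm_smul, Real.norm_of_nonneg (by positivity), zpow_neg, inv_mul_le_one₀ (by positivity)]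
    exact (hk_le.trans (zpow_le_zpow_right₀ one_le_two (by omega)))
  calc ‖T f‖ = 2 ^ (k + 1) * ‖T g‖ := by rw [hfg, norm_apply_two_zpow_smul hadd hg]
    _ ≤ 2 ^ (k + 1) :=
        mul_le_of_le_one_right (by positivity) (norm_apply_le_one hpos hadd hmul hg hg₁)
    _ = 2 * 2 ^ k := by rw [zpow_add_one₀ two_ne_zero, mul_comm]
    _ ≤ 2 * ‖f‖ := by linarith

lemma norm_apply_pow_two_pow_le (n : ℕ) :
    ∀ {f : C₀(X, ℝ)}, (∀ x, 0 ≤ f x) → ‖T f‖ ^ 2 ^ n ≤ 2 * ‖f‖ ^ 2 ^ n := by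
  induction n with
  | zero =>
    intro f hf
    simpa using norm_apply_le_two_mul hpos hadd hmul hf
  | succ n ih =>
    intro f hf
    have h := ih (f := f * f) fun x => mul_self_nonneg (f x)
    rwa [hmul f f hf hf, norm_mul_self_eq_sq, norm_mul_self_eq_sq, ← pow_mul, ← pow_mul,
      ← pow_succ'] at h

lemma norm_apply_le {f : C₀(X, ℝ)} (hf : ∀ x, 0 ≤ f x) : ‖T f‖ ≤ ‖f‖ :=
  le_of_forall_pow_two_pow_le_mul (norm_nonneg f) fun n =>
    norm_apply_pow_two_pow_le hpos hadd hmul n hf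

end PositiveConeMap

theorem norm_tildeT_le_general {X Y : Type*}
    [TopologicalSpace X]
    [TopologicalSpace Y]
    (T : C₀(X, ℝ) → C₀(Y, ℝ))
    (hbij : Set.BijOn T {f : C₀(X, ℝ) | ∀ x, 0 ≤ f x} {g : C₀(Y, ℝ) | ∀ y, 0 ≤ g y})
    (hadd : ∀ f g : C₀(X, ℝ), (∀ x, 0 ≤ f x) → (∀ x, 0 ≤ g x) →
      ‖T (f + g)‖ = ‖T f + T g‖)
    (hmul : ∀ f g : C₀(X, ℝ), (∀ x, 0 ≤ f x) → (∀ x, 0 ≤ g x) →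
      ‖T (f * g)‖ = ‖T f * T g‖) :
    ∀ f : C₀(X, ℝ), ‖tildeT T f‖ ≤ ‖f‖ := by
  intro f
  have hp := posPart_nonneg f
  have hn := negPart_nonneg f
  calc ‖tildeT T f‖ ≤ max ‖T (posPart f)‖ ‖T (negPart f)‖ :=
        norm_sub_le_max_of_nonneg (hbij.mapsTo hp) (hbij.mapsTo hn)
    _ ≤ max ‖posPart f‖ ‖negPart f‖ :=
        max_le_max (norm_apply_le hbij.mapsTo hadd hmul hp) (norm_apply_le hbij.mapsTo hadd hmul hn)
    _ ≤ ‖f‖ := max_le (norm_posPart_le f) (norm_negPart_le f)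

/-- The extension of a ring isomorphism in norm between positive cones is norm-decreasing. -/
theorem norm_tildeT_le {X Y : Type*}
    [TopologicalSpace X] [LocallyCompactSpace X] [T2Space X]
    [TopologicalSpace Y] [LocallyCompactSpace Y] [T2Space Y]
    (T : C₀(X, ℝ) → C₀(Y, ℝ))
    (hbij : Set.BijOn T {f : C₀(X, ℝ) | ∀ x, 0 ≤ f x} {g : C₀(Y, ℝ) | ∀ y, 0 ≤ g y})
    (hadd : ∀ f g : C₀(X, ℝ), (∀ x, 0 ≤ f x) → (∀ x, 0 ≤ g x) →
      ‖T (f + g)‖ = ‖T f + T g‖)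
    (hmul : ∀ f g : C₀(X, ℝ), (∀ x, 0 ≤ f x) → (∀ x, 0 ≤ g x) →
      ‖T (f * g)‖ = ‖T f * T g‖) :
    ∀ f : C₀(X, ℝ), ‖tildeT T f‖ ≤ ‖f‖ :=
  norm_tildeT_le_general T hbij hadd hmul
end

section
/- Let X and Y be locally compact Hausdorff spaces and let U : C₀(X) → C₀(Y) be a surjective linear isometry that maps the positive cone C₀(X)⁺ into the positive cone C₀(Y)⁺. Then there exists a homeomorphism τ : Y → X such that U(f)(y) = f(τ(y)) for all f ∈ C₀(X) and all y ∈ Y. -/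
open scoped ZeroAtInfty
open Filter ZeroAtInftyContinuousMap

section Helpers

variable {X : Type*} [TopologicalSpace X]

/-- pointwise min of two C₀ functions -/
noncomputable def BS.inf2 (f g : C₀(X, ℝ)) : C₀(X, ℝ) :=
  ⟨⟨fun x => min (f x) (g x), (map_continuous f).min (map_continuous g)⟩, by
    simpa using (zero_at_infty f).min (zero_at_infty g)⟩

@[simp] lemma BS.inf2_apply (f g : C₀(X, ℝ)) (x : X) : BS.inf2 f g x = min (f x) (g x) := rfl

/-- pointwise positive part -/
noncomputable def BS.pos2 (f : C₀(X, ℝ)) : C₀(X, ℝ) :=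
  ⟨⟨fun x => max (f x) 0, (map_continuous f).max continuous_const⟩, by
    have := (zero_at_infty (α := X) (β := ℝ) f).max (tendsto_const_nhds (x := (0:ℝ)))
    simpa using this⟩

@[simp] lemma BS.pos2_apply (f : C₀(X, ℝ)) (x : X) : BS.pos2 f x = max (f x) 0 := rfl

lemma BS.abs_apply_le_norm (f : C₀(X, ℝ)) (x : X) : |f x| ≤ ‖f‖ := by
  rw [← norm_toBCF_eq_norm]
  exact (f.toBCF).norm_coe_le_norm x

lemma BS.norm_le_of_forall {f : C₀(X, ℝ)} {C : ℝ} (hC : 0 ≤ C) (h : ∀ x, |f x| ≤ C) : ‖f‖ ≤ C := by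
  rw [← norm_toBCF_eq_norm]
  exact BoundedContinuousFunction.norm_le hC |>.mpr h

variable [LocallyCompactSpace X] [T2Space X]

/-- Urysohn bump in C₀ -/
lemma BS.exists_bump (x : X) {V : Set X} (hV : IsOpen V) (hx : x ∈ V) :
    ∃ g : C₀(X, ℝ), (∀ z, 0 ≤ g z) ∧ (∀ z, g z ≤ 1) ∧ g x = 1 ∧ ∀ z ∉ V, g z = 0 := by
  obtain ⟨f, hf1, hf0, hfc, hficc⟩ :=
    exists_continuous_one_zero_of_isCompact (isCompact_singleton (x := x)) hV.isClosed_compl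
      (Set.disjoint_left.mpr fun z hz => by simpa [Set.mem_singleton_iff.mp hz] using hx)
  refine ⟨⟨f, hfc.is_zero_at_infty⟩, fun z => (hficc z).1, fun z => (hficc z).2,
    hf1 rfl, fun z hz => hf0 hz⟩

end Helpers
section Core

variable {X Y : Type*}
    [TopologicalSpace X] [LocallyCompactSpace X] [T2Space X]
    [TopologicalSpace Y] [LocallyCompactSpace Y] [T2Space Y]

lemma BS.mono (e : C₀(X, ℝ) ≃ₗᵢ[ℝ] C₀(Y, ℝ))
    (hp : ∀ f : C₀(X, ℝ), (∀ x, 0 ≤ f x) → ∀ y, 0 ≤ e f y)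
    {u v : C₀(X, ℝ)} (huv : ∀ x, u x ≤ v x) (y : Y) : e u y ≤ e v y := by
  have h0 : ∀ x, 0 ≤ (v - u) x := by intro x; simp [sub_nonneg, huv x]
  have := hp (v - u) h0 y
  have hsub : e (v - u) = e v - e u := map_sub e v u
  rw [hsub] at this
  simpa [sub_nonneg] using this

lemma BS.map_min (e : C₀(X, ℝ) ≃ₗᵢ[ℝ] C₀(Y, ℝ))
    (hp : ∀ f : C₀(X, ℝ), (∀ x, 0 ≤ f x) → ∀ y, 0 ≤ e f y)
    (hq : ∀ h : C₀(Y, ℝ), (∀ y, 0 ≤ h y) → ∀ x, 0 ≤ e.symm h x)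
    (f g : C₀(X, ℝ)) (y : Y) : e (BS.inf2 f g) y = min (e f y) (e g y) := by
  have hmonoY : ∀ {u v : C₀(Y, ℝ)}, (∀ t, u t ≤ v t) → ∀ x, e.symm u x ≤ e.symm v x := by
    intro u v huv x
    have h0 : ∀ t, 0 ≤ (v - u) t := by intro t; simp [sub_nonneg, huv t]
    have := hq (v - u) h0 x
    have hsub : e.symm (v - u) = e.symm v - e.symm u := map_sub e.symm v u
    rw [hsub] at this
    simpa [sub_nonneg] using this
  refine le_antisymm (le_min ?_ ?_) ?_
  · exact BS.mono e hp (fun x => min_le_left _ _) y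
  · exact BS.mono e hp (fun x => min_le_right _ _) y
  · set h : C₀(X, ℝ) := e.symm (BS.inf2 (e f) (e g)) with hh
    have hhf : ∀ x, h x ≤ f x := by
      intro x
      have := hmonoY (u := BS.inf2 (e f) (e g)) (v := e f) (fun t => min_le_left _ _) x
      simpa [hh] using this
    have hhg : ∀ x, h x ≤ g x := by
      intro x
      have := hmonoY (u := BS.inf2 (e f) (e g)) (v := e g) (fun t => min_le_right _ _) x
      simpa [hh] using this
    have : e h y ≤ e (BS.inf2 f g) y :=
      BS.mono e hp (fun x => le_min (hhf x) (hhg x)) y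
    simpa [hh] using this

lemma BS.exists_point (e : C₀(X, ℝ) ≃ₗᵢ[ℝ] C₀(Y, ℝ))
    (hp : ∀ f : C₀(X, ℝ), (∀ x, 0 ≤ f x) → ∀ y, 0 ≤ e f y)
    (hq : ∀ h : C₀(Y, ℝ), (∀ y, 0 ≤ h y) → ∀ x, 0 ≤ e.symm h x)
    (y : Y) : ∃ x : X, ∀ g : C₀(X, ℝ), (∀ z, 0 ≤ g z) → e g y ≤ g x := by
  classical
  set ι := {p : C₀(X, ℝ) × ℝ // (∀ z, 0 ≤ p.1 z) ∧ e p.1 y = 1 ∧ 0 < p.2 ∧ p.2 < 1} with hι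
  have hne : Nonempty ι := by
    obtain ⟨h, hh0, hh1, hhy, -⟩ := BS.exists_bump (X := Y) y isOpen_univ (Set.mem_univ y)
    refine ⟨⟨(e.symm h, 1/2), hq h hh0, ?_, by norm_num, by norm_num⟩⟩
    simp [hhy]
  set Z : ι → Set X := fun p => {x | 1 - p.1.2 ≤ p.1.1 x} with hZ
  have hZne : ∀ p : ι, (Z p).Nonempty := by
    rintro ⟨⟨g, ε⟩, hg0, hgy, hε0, hε1⟩
    by_contra hc
    push_neg at hc
    simp only [hZ, Set.not_nonempty_iff_eq_empty, Set.eq_empty_iff_forall_notMem,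
      Set.mem_setOf_eq, not_le] at hc
    have hnorm : ‖g‖ ≤ 1 - ε := by
      refine BS.norm_le_of_forall (by linarith) fun x => ?_
      rw [abs_of_nonneg (hg0 x)]
      exact le_of_lt (hc x)
    have h1 : (1 : ℝ) ≤ ‖g‖ := by
      calc (1 : ℝ) = |e g y| := by rw [hgy]; simp
      _ ≤ ‖e g‖ := BS.abs_apply_le_norm _ y
      _ = ‖g‖ := e.norm_map g
    linarith
  have hZcl : ∀ p : ι, IsClosed (Z p) := by
    rintro ⟨⟨g, ε⟩, hg0, hgy, hε0, hε1⟩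
    exact isClosed_le continuous_const (map_continuous g)
  have hZc : ∀ p : ι, IsCompact (Z p) := by
    rintro ⟨⟨g, ε⟩, hg0, hgy, hε0, hε1⟩
    have hmem : {x | dist (g x) 0 < 1 - ε} ∈ Filter.cocompact X :=
      Metric.tendsto_nhds.mp (zero_at_infty g) (1 - ε) (by linarith)
    obtain ⟨K, hK, hKc⟩ := Filter.mem_cocompact.mp hmem
    refine IsCompact.of_isClosed_subset hK
      (isClosed_le continuous_const (map_continuous g)) fun x hx => ?_
    simp only [hZ, Set.mem_setOf_eq] at hx
    by_contra hxK
    have := hKc hxK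
    simp only [Set.mem_setOf_eq, Real.dist_eq, sub_zero] at this
    rw [abs_of_nonneg (hg0 x)] at this
    linarith
  have hZd : Directed (· ⊇ ·) Z := by
    rintro ⟨⟨g1, ε1⟩, hg10, hg1y, hε10, hε11⟩ ⟨⟨g2, ε2⟩, hg20, hg2y, hε20, hε21⟩
    refine ⟨⟨(BS.inf2 g1 g2, min ε1 ε2), fun z => le_min (hg10 z) (hg20 z), ?_,
      lt_min hε10 hε20, lt_of_le_of_lt (min_le_left _ _) hε11⟩, ?_, ?_⟩
    · rw [BS.map_min e hp hq, hg1y, hg2y]; simp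
    · intro x hx
      simp only [hZ, Set.mem_setOf_eq, BS.inf2_apply] at hx ⊢
      have := hx.trans (min_le_left (g1 x) (g2 x))
      linarith [min_le_left ε1 ε2]
    · intro x hx
      simp only [hZ, Set.mem_setOf_eq, BS.inf2_apply] at hx ⊢
      have := hx.trans (min_le_right (g1 x) (g2 x))
      linarith [min_le_right ε1 ε2]
  obtain ⟨x, hx⟩ := IsCompact.nonempty_iInter_of_directed_nonempty_isCompact_isClosed
    Z hZd hZne hZc hZcl
  simp only [Set.mem_iInter] at hx
  refine ⟨x, fun g hg0 => ?_⟩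
  have key : ∀ g : C₀(X, ℝ), (∀ z, 0 ≤ g z) → e g y = 1 → 1 ≤ g x := by
    intro g hg0 hgy
    by_contra hc
    push_neg at hc
    have hgx0 : 0 ≤ g x := hg0 x
    set ε : ℝ := (1 - g x) / 2 with hε
    have hp1 : x ∈ Z ⟨(g, ε), hg0, hgy, by rw [hε]; linarith, by rw [hε]; linarith⟩ :=
      hx _
    simp only [hZ, Set.mem_setOf_eq] at hp1
    rw [hε] at hp1
    linarith
  have hb0 : 0 ≤ e g y := hp g hg0 y
  rcases eq_or_lt_of_le hb0 with hb | hb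
  · rw [← hb]; exact hg0 x
  · set b := e g y with hbdef
    have h1 : e (b⁻¹ • g) y = 1 := by
      rw [map_smul]
      simp [← hbdef, ne_of_gt hb]
    have h2 : (∀ z, 0 ≤ (b⁻¹ • g) z) := by
      intro z
      simp only [ZeroAtInftyContinuousMap.coe_smul, Pi.smul_apply, smul_eq_mul]
      exact mul_nonneg (inv_nonneg.mpr hb.le) (hg0 z)
    have := key _ h2 h1
    simp only [ZeroAtInftyContinuousMap.coe_smul, Pi.smul_apply, smul_eq_mul] at this
    calc b = b * 1 := (mul_one b).symm
    _ ≤ b * (b⁻¹ * g x) := by nlinarith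
    _ = g x := by field_simp

end Core
section Final

variable {X Y : Type*}
    [TopologicalSpace X] [LocallyCompactSpace X] [T2Space X]
    [TopologicalSpace Y] [LocallyCompactSpace Y] [T2Space Y]

lemma BS.symm_pos (e : C₀(X, ℝ) ≃ₗᵢ[ℝ] C₀(Y, ℝ))
    (hp : ∀ f : C₀(X, ℝ), (∀ x, 0 ≤ f x) → ∀ y, 0 ≤ e f y) :
    ∀ h : C₀(Y, ℝ), (∀ y, 0 ≤ h y) → ∀ x, 0 ≤ e.symm h x := by
  intro h hh x
  by_contra hc
  push_neg at hc
  set f : C₀(X, ℝ) := e.symm h with hf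
  have key : ∀ g : C₀(X, ℝ), (∀ z, 0 ≤ g z) → ‖f - g‖ ≤ max ‖f‖ ‖g‖ := by
    intro g hg
    have h1 : ‖f - g‖ = ‖h - e g‖ := by
      rw [← e.norm_map (f - g), map_sub]
      congr 1
      rw [hf, e.apply_symm_apply]
    rw [h1]
    refine BS.norm_le_of_forall (le_max_of_le_left (norm_nonneg f)) fun t => ?_
    have ha : 0 ≤ h t := hh t
    have hb : 0 ≤ e g t := hp g hg t
    have habs : |h t - e g t| ≤ max (h t) (e g t) := by
      rw [abs_le]
      constructor
      · have := le_max_right (h t) (e g t); linarith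
      · have := le_max_left (h t) (e g t); linarith
    refine habs.trans (max_le_max ?_ ?_)
    · calc h t ≤ |h t| := le_abs_self _
      _ ≤ ‖h‖ := BS.abs_apply_le_norm h t
      _ = ‖f‖ := by rw [hf, ← e.symm.norm_map h]
    · calc e g t ≤ |e g t| := le_abs_self _
      _ ≤ ‖e g‖ := BS.abs_apply_le_norm _ t
      _ = ‖g‖ := e.norm_map g
  obtain ⟨u, hu0, hu1, hux, -⟩ := BS.exists_bump x isOpen_univ (Set.mem_univ x)
  set g : C₀(X, ℝ) := ‖f‖ • u with hg
  have hg0 : ∀ z, 0 ≤ g z := by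
    intro z
    simp only [hg, ZeroAtInftyContinuousMap.coe_smul, Pi.smul_apply, smul_eq_mul]
    exact mul_nonneg (norm_nonneg f) (hu0 z)
  have hgnorm : ‖g‖ ≤ ‖f‖ := by
    refine BS.norm_le_of_forall (norm_nonneg f) fun z => ?_
    simp only [hg, ZeroAtInftyContinuousMap.coe_smul, Pi.smul_apply, smul_eq_mul]
    rw [abs_mul, abs_of_nonneg (norm_nonneg f), abs_of_nonneg (hu0 z)]
    calc ‖f‖ * u z ≤ ‖f‖ * 1 := by
          exact mul_le_mul_of_nonneg_left (hu1 z) (norm_nonneg f)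
    _ = ‖f‖ := mul_one _
  have hfx : |f x| ≤ ‖f‖ := BS.abs_apply_le_norm f x
  have hfpos : 0 < ‖f‖ := lt_of_lt_of_le (by rw [abs_of_nonpos hc.le]; linarith) hfx
  have hval : (f - g) x = f x - ‖f‖ := by
    simp [hg, hux]
  have h2 : ‖f‖ - f x ≤ ‖f - g‖ := by
    calc ‖f‖ - f x = |(f - g) x| := by rw [hval, abs_of_nonpos (by linarith)]; ring
    _ ≤ ‖f - g‖ := BS.abs_apply_le_norm _ x
  have h3 : ‖f - g‖ ≤ ‖f‖ := by
    have := key g hg0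
    rwa [max_eq_left hgnorm] at this
  linarith

lemma BS.continuous_of (e : C₀(X, ℝ) ≃ₗᵢ[ℝ] C₀(Y, ℝ)) (τ0 : Y → X)
    (hrep : ∀ g : C₀(X, ℝ), (∀ z, 0 ≤ g z) → ∀ y, e g y = g (τ0 y)) :
    Continuous τ0 := by
  rw [continuous_iff_continuousAt]
  intro y0
  rw [ContinuousAt, Filter.tendsto_def]
  intro V hV
  obtain ⟨V', hV'sub, hV'open, hmem⟩ := mem_nhds_iff.mp hV
  obtain ⟨g, hg0, -, hg1, hgout⟩ := BS.exists_bump (τ0 y0) hV'open hmem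
  have hopen : IsOpen {y | 1/2 < e g y} :=
    isOpen_lt continuous_const (map_continuous (e g))
  refine Filter.mem_of_superset (hopen.mem_nhds ?_) ?_
  · simp only [Set.mem_setOf_eq, hrep g hg0 y0, hg1]
    norm_num
  · intro y hy
    simp only [Set.mem_setOf_eq, hrep g hg0 y] at hy
    refine Set.mem_preimage.mpr (hV'sub ?_)
    by_contra hcon
    rw [hgout _ hcon] at hy
    norm_num at hy

end Final
/-- A surjective linear isometry between `C₀` spaces preserving positivity is a
composition operator induced by a homeomorphism. -/
theorem positive_linear_isometry_is_composition {X Y : Type*}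
    [TopologicalSpace X] [LocallyCompactSpace X] [T2Space X]
    [TopologicalSpace Y] [LocallyCompactSpace Y] [T2Space Y]
    (U : C₀(X, ℝ) →ₗᵢ[ℝ] C₀(Y, ℝ))
    (hsurj : Function.Surjective U)
    (hpos : ∀ f : C₀(X, ℝ), (∀ x, 0 ≤ f x) → ∀ y, 0 ≤ U f y) :
    ∃ τ : Y ≃ₜ X, ∀ f : C₀(X, ℝ), ∀ y : Y, U f y = f (τ y) := by
  classical
  set e : C₀(X, ℝ) ≃ₗᵢ[ℝ] C₀(Y, ℝ) := LinearIsometryEquiv.ofSurjective U hsurj with he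
  have hco : ∀ f : C₀(X, ℝ), e f = U f := by
    intro f
    rw [he]
    exact congrFun (LinearIsometryEquiv.coe_ofSurjective U hsurj) f
  have hp : ∀ f : C₀(X, ℝ), (∀ x, 0 ≤ f x) → ∀ y, 0 ≤ e f y := by
    intro f hf y; rw [hco]; exact hpos f hf y
  have hq : ∀ h : C₀(Y, ℝ), (∀ y, 0 ≤ h y) → ∀ x, 0 ≤ e.symm h x :=
    BS.symm_pos e hp
  have hq' : ∀ f : C₀(X, ℝ), (∀ x, 0 ≤ f x) → ∀ y, 0 ≤ e.symm.symm f y := by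
    simpa only [LinearIsometryEquiv.symm_symm] using hp
  set τ0 : Y → X := fun y => Classical.choose (BS.exists_point e hp hq y) with hτ0
  set σ0 : X → Y := fun x => Classical.choose (BS.exists_point e.symm hq hq' x) with hσ0
  have hi : ∀ (g : C₀(X, ℝ)), (∀ z, 0 ≤ g z) → ∀ y, e g y ≤ g (τ0 y) := by
    intro g hg y
    exact Classical.choose_spec (BS.exists_point e hp hq y) g hg
  have hii : ∀ (h : C₀(Y, ℝ)), (∀ z, 0 ≤ h z) → ∀ x, e.symm h x ≤ h (σ0 x) := by
    intro h hh x
    exact Classical.choose_spec (BS.exists_point e.symm hq hq' x) h hh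
  have hiii : ∀ (g : C₀(X, ℝ)), (∀ z, 0 ≤ g z) → ∀ x, g x ≤ e g (σ0 x) := by
    intro g hg x
    have := hii (e g) (hp g hg) x
    rwa [e.symm_apply_apply] at this
  have hiv : ∀ x, τ0 (σ0 x) = x := by
    intro x
    by_contra hne
    obtain ⟨g, hg0, -, hgx, hgout⟩ := BS.exists_bump x
      (isOpen_compl_singleton (x := τ0 (σ0 x)))
      (by simpa using Ne.symm hne)
    have h1 : g x ≤ e g (σ0 x) := hiii g hg0 x
    have h2 : e g (σ0 x) ≤ g (τ0 (σ0 x)) := hi g hg0 (σ0 x)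
    have h3 : g (τ0 (σ0 x)) = 0 := hgout _ (by simp)
    rw [hgx] at h1
    linarith
  have hv : ∀ y, σ0 (τ0 y) = y := by
    intro y
    by_contra hne
    obtain ⟨h, hh0, -, hhy, hhout⟩ := BS.exists_bump y
      (isOpen_compl_singleton (x := σ0 (τ0 y)))
      (by simpa using Ne.symm hne)
    have h1 : e (e.symm h) y ≤ (e.symm h) (τ0 y) := hi (e.symm h) (hq h hh0) y
    rw [e.apply_symm_apply] at h1
    have h2 : (e.symm h) (τ0 y) ≤ h (σ0 (τ0 y)) := hii h hh0 (τ0 y)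
    have h3 : h (σ0 (τ0 y)) = 0 := hhout _ (by simp)
    rw [hhy] at h1
    linarith
  have heq : ∀ (g : C₀(X, ℝ)), (∀ z, 0 ≤ g z) → ∀ y, e g y = g (τ0 y) := by
    intro g hg y
    refine le_antisymm (hi g hg y) ?_
    have := hiii g hg (τ0 y)
    rwa [hv y] at this
  have heq' : ∀ (h : C₀(Y, ℝ)), (∀ z, 0 ≤ h z) → ∀ x, e.symm h x = h (σ0 x) := by
    intro h hh x
    refine le_antisymm (hii h hh x) ?_
    have := hi (e.symm h) (hq h hh) (σ0 x)
    rw [e.apply_symm_apply, hiv x] at this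
    exact this
  have hall : ∀ (f : C₀(X, ℝ)) (y : Y), e f y = f (τ0 y) := by
    intro f y
    have hdec : f = BS.pos2 f - BS.pos2 (-f) := by
      ext z
      simp only [ZeroAtInftyContinuousMap.coe_sub, Pi.sub_apply, BS.pos2_apply,
        ZeroAtInftyContinuousMap.coe_neg, Pi.neg_apply]
      rcases le_total (f z) 0 with h | h
      · rw [max_eq_right h, max_eq_left (by linarith)]; ring
      · rw [max_eq_left h, max_eq_right (by linarith)]; ring
    have hpos1 : ∀ z, (0 : ℝ) ≤ BS.pos2 f z := fun z => le_max_right _ _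
    have hpos2 : ∀ z, (0 : ℝ) ≤ BS.pos2 (-f) z := fun z => le_max_right _ _
    calc e f y = e (BS.pos2 f - BS.pos2 (-f)) y := by rw [← hdec]
    _ = e (BS.pos2 f) y - e (BS.pos2 (-f)) y := by
        rw [map_sub]
        simp [ZeroAtInftyContinuousMap.coe_sub, Pi.sub_apply]
    _ = BS.pos2 f (τ0 y) - BS.pos2 (-f) (τ0 y) := by
        rw [heq _ hpos1 y, heq _ hpos2 y]
    _ = f (τ0 y) := by
        conv_rhs => rw [hdec]
        simp [ZeroAtInftyContinuousMap.coe_sub, Pi.sub_apply]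
  have hcτ : Continuous τ0 := BS.continuous_of e τ0 heq
  have hcσ : Continuous σ0 := BS.continuous_of e.symm σ0 heq'
  refine ⟨⟨⟨τ0, σ0, hv, hiv⟩, hcτ, hcσ⟩, fun f y => ?_⟩
  rw [← hco]
  exact hall f y
end
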